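/- arXiv:2009.02029 — 6 statements merged into one kernel-verified Lean document; each statement's English description precedes it below -/
import Mathlib

section
/- Let X be a nonnegative random variable with cumulative distribution function F and finite mean E[X] = ∫₀^∞ (1 − F(x)) dx. Then the cumulative residual entropy of X satisfies 𝓔(X) + E[X] = Σ_{n=1}^∞ μ_{n+1:n+1} / (n(n+1)), where both sides are equal as values in [0, ∞]; equivalently, if the right-hand series is finite, 𝓔(X) = Σ_{n=1}^∞ μ_{n+1:n+1}/(n(n+1)) − E[X]. -/
/-!
Pointwise, with `p = F x ∈ [0, 1)`, the logarithmic series `-log (1 - p) = ∑ p^(n+1)/(n+1)` together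
with `1/((n+1)(n+2)) = 1/(n+1) - 1/(n+2)` gives
`-(1 - p) log (1 - p) + (1 - p) = ∑ (1 - p^(n+2))/((n+1)(n+2))`.
All terms are nonnegative, so integrating over `x > 0` and exchanging sum and integral
(monotone convergence) yields the identity in `[0, ∞]`.
-/

open MeasureTheory ProbabilityTheory Set
open scoped ENNReal

lemma hasSum_one_div_succ_mul_add_two :
    HasSum (fun n : ℕ => 1 / (((n : ℝ) + 1) * ((n : ℝ) + 2))) 1 := by
  have hsplit : ∀ n : ℕ, 1 / (((n : ℝ) + 1) * ((n : ℝ) + 2))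
      = 1 / ((n : ℝ) + 1) - 1 / (((n + 1 : ℕ) : ℝ) + 1) := by
    intro n
    push_cast
    field_simp
    ring
  rw [hasSum_iff_tendsto_nat_of_nonneg fun n => by positivity]
  simp_rw [hsplit, Finset.sum_range_sub']
  simpa using tendsto_one_div_add_atTop_nhds_zero_nat.const_sub (1 : ℝ)

lemma hasSum_pow_add_two_div_succ_mul_add_two {p : ℝ} (hp : |p| < 1) :
    HasSum (fun n : ℕ => p ^ (n + 2) / (((n : ℝ) + 1) * ((n : ℝ) + 2)))
      ((1 - p) * Real.log (1 - p) + p) := by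
  have hlog := Real.hasSum_pow_div_log_of_abs_lt_one hp
  have hlog_shift :
      HasSum (fun n : ℕ => p ^ (n + 2) / ((n : ℝ) + 2)) (-Real.log (1 - p) - p) := by
    convert (hasSum_nat_add_iff' 1).2 hlog using 2 with n
    · rfl
    · push_cast
      ring
    · simp
  convert (hlog.mul_left p).sub hlog_shift using 2 with n
  · rfl
  · field_simp
    ring
  · ring

lemma hasSum_one_sub_pow_add_two_div_succ_mul_add_two {p : ℝ} (hp : |p| < 1) :
    HasSum (fun n : ℕ => (1 - p ^ (n + 2)) / (((n : ℝ) + 1) * ((n : ℝ) + 2)))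
      (-((1 - p) * Real.log (1 - p)) + (1 - p)) := by
  convert hasSum_one_div_succ_mul_add_two.sub
    (hasSum_pow_add_two_div_succ_mul_add_two hp) using 2 with n
  · rfl
  · rw [sub_div]
  · ring

lemma ofReal_neg_mul_log_add_ofReal_eq_tsum {p : ℝ} (h0 : 0 ≤ p) (h1 : p ≤ 1) :
    ENNReal.ofReal (-((1 - p) * Real.log (1 - p))) + ENNReal.ofReal (1 - p)
      = ∑' n : ℕ, ENNReal.ofReal (1 - p ^ (n + 2))
          / (((n : ℝ≥0∞) + 1) * ((n : ℝ≥0∞) + 2)) := by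
  rcases h1.eq_or_lt with rfl | hlt
  · simp
  have hsum := hasSum_one_sub_pow_add_two_div_succ_mul_add_two (abs_lt.2 ⟨by linarith, hlt⟩)
  have hterm_nonneg : ∀ n : ℕ, 0 ≤ (1 - p ^ (n + 2)) / (((n : ℝ) + 1) * ((n : ℝ) + 2)) :=
    fun n => div_nonneg (sub_nonneg.2 (pow_le_one₀ h0 h1)) (by positivity)
  have hcre_nonneg : 0 ≤ -((1 - p) * Real.log (1 - p)) :=
    neg_nonneg.2 <| mul_nonpos_of_nonneg_of_nonpos (by linarith)
      (Real.log_nonpos (by linarith) (by linarith))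
  rw [← ENNReal.ofReal_add hcre_nonneg (by linarith), ← hsum.tsum_eq,
    ENNReal.ofReal_tsum_of_nonneg hterm_nonneg hsum.summable]
  refine tsum_congr fun n => ?_
  have hden : ((n : ℝ≥0∞) + 1) * ((n : ℝ≥0∞) + 2)
      = ENNReal.ofReal (((n : ℝ) + 1) * ((n : ℝ) + 2)) := by
    exact_mod_cast (ENNReal.ofReal_natCast ((n + 1) * (n + 2))).symm
  rw [hden, ENNReal.ofReal_div_of_pos (by positivity)]

theorem cre_add_mean_eq_tsum_max_order_stats_general
    (μ : Measure ℝ) :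
    (∫⁻ x in Set.Ioi (0 : ℝ),
        ENNReal.ofReal (-((1 - cdf μ x) * Real.log (1 - cdf μ x))))
      + ∫⁻ x in Set.Ioi (0 : ℝ), ENNReal.ofReal (1 - cdf μ x)
    = ∑' n : ℕ,
        (∫⁻ x in Set.Ioi (0 : ℝ), ENNReal.ofReal (1 - (cdf μ x) ^ (n + 2)))
          / (((n : ℝ≥0∞) + 1) * ((n : ℝ≥0∞) + 2)) := by
  have hF : Measurable (cdf μ) := (monotone_cdf μ).measurable
  have hcre_meas :
      Measurable fun x => ENNReal.ofReal (-((1 - cdf μ x) * Real.log (1 - cdf μ x))) := by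
    fun_prop
  have hmax_meas : ∀ n : ℕ, Measurable fun x => ENNReal.ofReal (1 - cdf μ x ^ (n + 2)) := by
    intro n
    fun_prop
  rw [← lintegral_add_left hcre_meas]
  simp_rw [ENNReal.div_eq_inv_mul, ← lintegral_const_mul _ (hmax_meas _)]
  rw [← lintegral_tsum fun n => ((hmax_meas n).const_mul _).aemeasurable]
  refine lintegral_congr fun x => ?_
  simp_rw [← ENNReal.div_eq_inv_mul]
  exact ofReal_neg_mul_log_add_ofReal_eq_tsum (cdf_nonneg μ x) (cdf_le_one μ x)

/-- For a nonnegative random variable (here: a probability measure `μ` on `ℝ`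
giving no mass to the negatives) with cdf `F = cdf μ` and finite mean
`E[X] = ∫₀^∞ (1 - F x) dx`, the cumulative residual entropy
`𝓔(X) = ∫₀^∞ -(1 - F x) log (1 - F x) dx` satisfies
`𝓔(X) + E[X] = ∑_{n=1}^∞ μ_{n+1:n+1} / (n (n+1))` as values in `[0, ∞]`,
where `μ_{m:m} = ∫₀^∞ (1 - (F x)^m) dx` is the mean of the largest order statistic. -/
theorem cre_add_mean_eq_tsum_max_order_stats
    (μ : Measure ℝ) [IsProbabilityMeasure μ] (hnonneg : μ (Set.Iio 0) = 0)
    (hmean : ∫⁻ x in Set.Ioi (0 : ℝ), ENNReal.ofReal (1 - cdf μ x) ≠ ⊤) :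
    (∫⁻ x in Set.Ioi (0 : ℝ),
        ENNReal.ofReal (-((1 - cdf μ x) * Real.log (1 - cdf μ x))))
      + ∫⁻ x in Set.Ioi (0 : ℝ), ENNReal.ofReal (1 - cdf μ x)
    = ∑' n : ℕ,
        (∫⁻ x in Set.Ioi (0 : ℝ), ENNReal.ofReal (1 - (cdf μ x) ^ (n + 2)))
          / (((n : ℝ≥0∞) + 1) * ((n : ℝ≥0∞) + 2)) :=
  cre_add_mean_eq_tsum_max_order_stats_general μ
end

section
/- Let X be a nonnegative random variable with cumulative distribution function F and finite second moment E[X²] = ∫₀^∞ 2x(1 − F(x)) dx. Then the weighted cumulative residual entropy of X satisfies 𝓔^w(X) + (1/2)E[X²] = (1/2) Σ_{n=1}^∞ μ^{(2)}_{n+1:n+1}/(n(n+1)), where both sides are equal as values in [0, ∞]. -/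
/-!
For `0 ≤ p ≤ 1` the log series gives, after a partial-fraction split,
`∑ₙ (1 - p ^ (n + 2)) / ((n + 1) (n + 2)) = (1 - p) - (1 - p) log (1 - p)`.
Taking `p = F x`, multiplying by `2x` and integrating, this pointwise identity becomes the
theorem: in `[0, ∞]` sums and integrals of nonnegative functions commute unconditionally.
-/

open MeasureTheory ProbabilityTheory Set Filter Topology
open scoped ENNReal

lemma Antitone.hasSum_sub_succ {f : ℕ → ℝ} {l : ℝ} (hf : Antitone f)
    (hl : Tendsto f atTop (𝓝 l)) : HasSum (fun n ↦ f n - f (n + 1)) (f 0 - l) := by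
  rw [hasSum_iff_tendsto_nat_of_nonneg (fun n ↦ sub_nonneg.2 (hf n.le_succ))]
  simp_rw [Finset.sum_range_sub']
  exact tendsto_const_nhds.sub hl

lemma hasSum_one_div_succ_mul_succ_succ :
    HasSum (fun n : ℕ ↦ 1 / (((n : ℝ) + 1) * ((n : ℝ) + 2))) 1 := by
  have hanti : Antitone fun n : ℕ ↦ 1 / ((n : ℝ) + 1) := fun m n hmn ↦
    one_div_le_one_div_of_le (by positivity) (by gcongr)
  convert hanti.hasSum_sub_succ tendsto_one_div_add_atTop_nhds_zero_nat using 1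
  · funext n
    push_cast
    field_simp
    ring
  · simp

lemma Real.hasSum_pow_div_succ_mul_succ_succ {p : ℝ} (hp : |p| < 1) :
    HasSum (fun n : ℕ ↦ p ^ (n + 2) / (((n : ℝ) + 1) * ((n : ℝ) + 2)))
      ((1 - p) * Real.log (1 - p) + p) := by
  have hlog := Real.hasSum_pow_div_log_of_abs_lt_one hp
  have hshift : HasSum (fun n : ℕ ↦ p ^ (n + 2) / ((n : ℝ) + 2)) (-Real.log (1 - p) - p) := by
    simpa [add_assoc, one_add_one_eq_two] using (hasSum_nat_add_iff' 1).2 hlog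
  have hpf : ∀ n : ℕ, p ^ (n + 2) / (((n : ℝ) + 1) * ((n : ℝ) + 2))
      = p * (p ^ (n + 1) / ((n : ℝ) + 1)) - p ^ (n + 2) / ((n : ℝ) + 2) := fun n ↦ by
    field_simp
    ring
  simp_rw [hpf]
  rw [show (1 - p) * Real.log (1 - p) + p = p * -Real.log (1 - p) - (-Real.log (1 - p) - p) by
    ring]
  exact (hlog.mul_left p).sub hshift

lemma Real.hasSum_one_sub_pow_div_succ_mul_succ_succ {p : ℝ} (hp₀ : -1 < p) (hp₁ : p ≤ 1) :
    HasSum (fun n : ℕ ↦ (1 - p ^ (n + 2)) / (((n : ℝ) + 1) * ((n : ℝ) + 2)))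
      ((1 - p) - (1 - p) * Real.log (1 - p)) := by
  rcases hp₁.eq_or_lt with rfl | hp₁
  · simp
  simp_rw [sub_div]
  rw [show 1 - p - (1 - p) * Real.log (1 - p) = 1 - ((1 - p) * Real.log (1 - p) + p) by ring]
  exact hasSum_one_div_succ_mul_succ_succ.sub
    (Real.hasSum_pow_div_succ_mul_succ_succ (abs_lt.2 ⟨hp₀, hp₁⟩))

lemma ofReal_neg_mul_log_add_half_eq_half_tsum {x p : ℝ} (hx : 0 ≤ x) (hp₀ : 0 ≤ p)
    (hp₁ : p ≤ 1) :
    ENNReal.ofReal (-(x * (1 - p) * Real.log (1 - p))) + ENNReal.ofReal (2 * x * (1 - p)) / 2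
      = (∑' n : ℕ, ENNReal.ofReal (2 * x * (1 - p ^ (n + 2)))
          / (((n : ℝ≥0∞) + 1) * ((n : ℝ≥0∞) + 2))) / 2 := by
  have hsum := (Real.hasSum_one_sub_pow_div_succ_mul_succ_succ (by linarith) hp₁).mul_left (2 * x)
  have hterm : ∀ n : ℕ, ENNReal.ofReal (2 * x * (1 - p ^ (n + 2)))
      / (((n : ℝ≥0∞) + 1) * ((n : ℝ≥0∞) + 2))
      = ENNReal.ofReal (2 * x * ((1 - p ^ (n + 2)) / (((n : ℝ) + 1) * ((n : ℝ) + 2)))) := by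
    intro n
    rw [← mul_div_assoc, ENNReal.ofReal_div_of_pos (by positivity)]
    congr
    norm_cast
  have hnonneg : ∀ n : ℕ,
      0 ≤ 2 * x * ((1 - p ^ (n + 2)) / (((n : ℝ) + 1) * ((n : ℝ) + 2))) := fun n ↦
    mul_nonneg (by positivity) (div_nonneg (sub_nonneg.2 (pow_le_one₀ hp₀ hp₁)) (by positivity))
  have hlog : Real.log (1 - p) ≤ 0 := Real.log_nonpos (by linarith) (by linarith)
  have hentropy : 0 ≤ -(x * (1 - p) * Real.log (1 - p)) :=
    neg_nonneg.2 (mul_nonpos_of_nonneg_of_nonpos (mul_nonneg hx (by linarith)) hlog)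
  have half (a : ℝ) : ENNReal.ofReal a / 2 = ENNReal.ofReal (a / 2) := by
    rw [ENNReal.ofReal_div_of_pos two_pos, ENNReal.ofReal_ofNat]
  rw [tsum_congr hterm, ← ENNReal.ofReal_tsum_of_nonneg hnonneg hsum.summable, hsum.tsum_eq,
    half, half, ← ENNReal.ofReal_add hentropy (by nlinarith)]
  congr 1
  ring

lemma MeasureTheory.lintegral_div_const' {α : Type*} [MeasurableSpace α] (μ : Measure α)
    (f : α → ℝ≥0∞) {c : ℝ≥0∞} (hc : c ≠ 0) :
    ∫⁻ a, f a / c ∂μ = (∫⁻ a, f a ∂μ) / c := by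
  simp_rw [div_eq_mul_inv]
  exact lintegral_mul_const' _ _ (ENNReal.inv_ne_top.2 hc)

theorem wcre_add_half_second_moment_eq_half_tsum_max_order_stats_general
    (μ : Measure ℝ) :
    (∫⁻ x in Set.Ioi (0 : ℝ),
        ENNReal.ofReal (-(x * (1 - cdf μ x) * Real.log (1 - cdf μ x))))
      + (∫⁻ x in Set.Ioi (0 : ℝ), ENNReal.ofReal (2 * x * (1 - cdf μ x))) / 2
    = (∑' n : ℕ,
        (∫⁻ x in Set.Ioi (0 : ℝ), ENNReal.ofReal (2 * x * (1 - (cdf μ x) ^ (n + 2))))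
          / (((n : ℝ≥0∞) + 1) * ((n : ℝ≥0∞) + 2))) / 2 := by
  have hF : Measurable (cdf μ) := (monotone_cdf μ).measurable
  calc _ = ∫⁻ x in Ioi 0, (ENNReal.ofReal (-(x * (1 - cdf μ x) * Real.log (1 - cdf μ x)))
          + ENNReal.ofReal (2 * x * (1 - cdf μ x)) / 2) := by
        rw [lintegral_add_left (by fun_prop), lintegral_div_const' _ _ two_ne_zero]
    _ = ∫⁻ x in Ioi 0, (∑' n : ℕ, ENNReal.ofReal (2 * x * (1 - cdf μ x ^ (n + 2)))
          / (((n : ℝ≥0∞) + 1) * ((n : ℝ≥0∞) + 2))) / 2 :=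
        setLIntegral_congr_fun measurableSet_Ioi fun x hx ↦
          ofReal_neg_mul_log_add_half_eq_half_tsum (le_of_lt hx) (cdf_nonneg μ x) (cdf_le_one μ x)
    _ = _ := by
        rw [lintegral_div_const' _ _ two_ne_zero, lintegral_tsum fun n ↦ by fun_prop]
        congr 1
        exact tsum_congr fun n ↦ lintegral_div_const' _ _ (by positivity)

/-- For a nonnegative random variable with cdf `F = cdf μ` and finite second
moment `E[X²] = ∫₀^∞ 2x (1 - F x) dx`, the weighted cumulative residual entropy
`𝓔^w(X) = ∫₀^∞ -x (1 - F x) log (1 - F x) dx` satisfies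
`𝓔^w(X) + (1/2) E[X²] = (1/2) ∑_{n=1}^∞ μ^{(2)}_{n+1:n+1} / (n (n+1))` as values in `[0, ∞]`,
where `μ^{(2)}_{m:m} = ∫₀^∞ 2x (1 - (F x)^m) dx` is the second moment of the largest order
statistic. -/
theorem wcre_add_half_second_moment_eq_half_tsum_max_order_stats
    (μ : Measure ℝ) [IsProbabilityMeasure μ] (hnonneg : μ (Set.Iio 0) = 0)
    (hmom2 : ∫⁻ x in Set.Ioi (0 : ℝ), ENNReal.ofReal (2 * x * (1 - cdf μ x)) ≠ ⊤) :
    (∫⁻ x in Set.Ioi (0 : ℝ),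
        ENNReal.ofReal (-(x * (1 - cdf μ x) * Real.log (1 - cdf μ x))))
      + (∫⁻ x in Set.Ioi (0 : ℝ), ENNReal.ofReal (2 * x * (1 - cdf μ x))) / 2
    = (∑' n : ℕ,
        (∫⁻ x in Set.Ioi (0 : ℝ), ENNReal.ofReal (2 * x * (1 - (cdf μ x) ^ (n + 2))))
          / (((n : ℝ≥0∞) + 1) * ((n : ℝ≥0∞) + 2))) / 2 :=
  wcre_add_half_second_moment_eq_half_tsum_max_order_stats_general μ
end

section
/- Let X be a nonnegative random variable with cumulative distribution function F, finite mean μ = ∫₀^∞ (1 − F(x)) dx and finite variance σ² = ∫₀^∞ 2x(1 − F(x)) dx − μ². Then for every n ≥ 1, the mean of the largest order statistic from a sample of n i.i.d. copies of X satisfies μ_{n:n} ≤ σ(n − 1)/√(2n − 1) + μ (the Hartley–David–Gumbel bound for a parent distribution with mean μ and variance σ²). -/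
/-!
Let `Q v = λ {x > 0 | F x < v}` be the quantile function of `X⁺` on `(0, 1)`. Tonelli gives
`∫₀^∞ (1 - F^n) = ∫₀¹ n v^(n-1) Q v dv` and `∫₀^∞ 2x (1 - F) = ∫₀¹ Q²`. As the density
`n v^(n-1)` of the maximum of `n` uniform variables has mean `1`, `μ_{n:n} - μ` is the covariance of
`n v^(n-1)` and `Q` under the uniform distribution on `(0, 1)`, and Cauchy–Schwarz bounds it by the
product of the standard deviations `(n - 1)/√(2n - 1)` and `σ`.
-/

open MeasureTheory ProbabilityTheory Set

open scoped ENNReal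

section CauchySchwarz

variable {Ω : Type*} [MeasurableSpace Ω] {μ : Measure Ω} [IsFiniteMeasure μ] {X Y : Ω → ℝ}

lemma covariance_sq_le_variance_mul_variance (hX : MemLp X 2 μ) (hY : MemLp Y 2 μ) :
    cov[X, Y; μ] ^ 2 ≤ Var[X; μ] * Var[Y; μ] := by
  have hdiscrim := discrim_le_zero (a := Var[X; μ]) (b := -2 * cov[X, Y; μ]) (c := Var[Y; μ])
    fun t => by
      have h := variance_nonneg (t • X - Y) μ
      rw [variance_sub (hX.const_smul t) hY, variance_smul, covariance_smul_left] at h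
      linarith
  rw [discrim] at hdiscrim
  linarith

lemma covariance_le_sqrt_variance_mul_sqrt_variance (hX : MemLp X 2 μ) (hY : MemLp Y 2 μ) :
    cov[X, Y; μ] ≤ √Var[X; μ] * √Var[Y; μ] := by
  rw [← Real.sqrt_mul (variance_nonneg X μ)]
  exact Real.le_sqrt_of_sq_le (covariance_sq_le_variance_mul_variance hX hY)

end CauchySchwarz

lemma integral_eq_integral_of_lintegral_ofReal_eq {α β : Type*} [MeasurableSpace α]
    [MeasurableSpace β] {μ : Measure α} {ν : Measure β} {f : α → ℝ} {g : β → ℝ}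
    (hf₀ : 0 ≤ᵐ[μ] f) (hg₀ : 0 ≤ᵐ[ν] g) (hf : AEStronglyMeasurable f μ)
    (hg : AEStronglyMeasurable g ν)
    (h : ∫⁻ a, ENNReal.ofReal (f a) ∂μ = ∫⁻ b, ENNReal.ofReal (g b) ∂ν) :
    ∫ a, f a ∂μ = ∫ b, g b ∂ν := by
  rw [integral_eq_lintegral_of_nonneg_ae hf₀ hf, integral_eq_lintegral_of_nonneg_ae hg₀ hg, h]

lemma integrable_of_lintegral_ofReal_eq {α β : Type*} [MeasurableSpace α]
    [MeasurableSpace β] {μ : Measure α} {ν : Measure β} {f : α → ℝ} {g : β → ℝ}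
    (hf : Integrable f μ) (hg₀ : 0 ≤ᵐ[ν] g) (hg : AEStronglyMeasurable g ν)
    (h : ∫⁻ a, ENNReal.ofReal (f a) ∂μ = ∫⁻ b, ENNReal.ofReal (g b) ∂ν) :
    Integrable g ν :=
  ⟨hg, (hasFiniteIntegral_iff_ofReal hg₀).2 (h ▸ hf.lintegral_lt_top)⟩

lemma lintegral_Ioi_mul_lintegral_Ioo_eq {F : ℝ → ℝ} (hF : Measurable F) (hF₀ : ∀ x, 0 ≤ F x)
    {w g : ℝ → ℝ≥0∞} (hw : Measurable w) (hg : Measurable g) :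
    ∫⁻ x in Ioi 0, w x * ∫⁻ v in Ioo (F x) 1, g v
      = ∫⁻ v in Ioo 0 1, g v * ∫⁻ x in {x | 0 < x ∧ F x < v}, w x := by
  let f : ℝ → ℝ → ℝ≥0∞ := fun x v => if F x < v then w x * g v else 0
  have hf : Measurable (Function.uncurry f) :=
    Measurable.ite (measurableSet_lt (hF.comp measurable_fst) measurable_snd)
      ((hw.comp measurable_fst).mul (hg.comp measurable_snd)) measurable_const
  have inner_v (x : ℝ) : w x * ∫⁻ v in Ioo (F x) 1, g v = ∫⁻ v in Ioo 0 1, f x v := by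
    have hIoo : Ioi (F x) ∩ Ioo 0 1 = Ioo (F x) 1 := by rw [Ioi_inter_Ioo, max_eq_left (hF₀ x)]
    rw [← lintegral_const_mul _ hg, ← hIoo, ← Measure.restrict_restrict measurableSet_Ioi,
      ← lintegral_indicator measurableSet_Ioi]
    rfl
  have inner_x (v : ℝ) :
      g v * ∫⁻ x in {x | 0 < x ∧ F x < v}, w x = ∫⁻ x in Ioi 0, f x v := by
    have hset : {x | 0 < x ∧ F x < v} = F ⁻¹' Iio v ∩ Ioi 0 := by
      ext x; simp only [mem_ofPred_eq, mem_inter_iff, mem_preimage, mem_Iio, mem_Ioi, and_comm]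
    rw [← lintegral_const_mul _ hw, hset, ← Measure.restrict_restrict (hF measurableSet_Iio),
      ← lintegral_indicator (hF measurableSet_Iio)]
    congr 1 with x
    simp only [indicator, mem_preimage, mem_Iio, f, mul_comm]
  simp_rw [inner_v, inner_x]
  exact lintegral_lintegral_swap hf.aemeasurable

lemma ae_eq_Ioo_of_forall_Ioo_subset {A : Set ℝ} (hA : A ⊆ Ioi 0) (hlower : ∀ x ∈ A, Ioo 0 x ⊆ A)
    (hfin : volume A ≠ ∞) : Ioo 0 (volume A).toReal =ᵐ[volume] A := by
  set t := (volume A).toReal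
  have hvol : volume A = ENNReal.ofReal t := (ENNReal.ofReal_toReal hfin).symm
  have hsub : Ioo 0 t ⊆ A := by
    intro b hb
    by_contra hbA
    have hAb : A ⊆ Ioo 0 b := fun x hx =>
      ⟨hA hx, lt_of_not_ge fun hbx => hbA <|
        (eq_or_lt_of_le hbx).elim (fun h => h ▸ hx) fun h => hlower x hx ⟨hb.1, h⟩⟩
    have := measure_mono (μ := volume) hAb
    rw [hvol, Real.volume_Ioo, sub_zero, ENNReal.ofReal_le_ofReal_iff hb.1.le] at this
    exact absurd hb.2 this.not_gt
  refine ae_eq_of_subset_of_measure_ge hsub ?_ measurableSet_Ioo.nullMeasurableSet hfin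
  rw [Real.volume_Ioo, sub_zero, hvol]

lemma lintegral_ofReal_two_mul_eq_sq {A : Set ℝ} (hA : A ⊆ Ioi 0)
    (hlower : ∀ x ∈ A, Ioo 0 x ⊆ A) (hfin : volume A ≠ ∞) :
    ∫⁻ x in A, ENNReal.ofReal (2 * x) = volume A ^ 2 := by
  set t := (volume A).toReal
  have ht : 0 ≤ t := ENNReal.toReal_nonneg
  rw [← setLIntegral_congr (ae_eq_Ioo_of_forall_Ioo_subset hA hlower hfin),
    ← ofReal_integral_eq_lintegral_ofReal, ← integral_Ioc_eq_integral_Ioo,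
    ← intervalIntegral.integral_of_le ht, intervalIntegral.integral_const_mul, integral_id,
    ← ENNReal.ofReal_toReal hfin, ← ENNReal.ofReal_pow ht]
  · ring_nf
  · exact (continuous_const.mul continuous_id).integrableOn_Icc.mono_set Ioo_subset_Icc_self
  · filter_upwards [ae_restrict_mem measurableSet_Ioo] with x hx
    simp only [Pi.zero_apply]; linarith [hx.1]

lemma lintegral_Ioo_ofReal_succ_mul_pow {a : ℝ} (ha₀ : 0 ≤ a) (ha₁ : a ≤ 1) (k : ℕ) :
    ∫⁻ v in Ioo a 1, ENNReal.ofReal ((k + 1) * v ^ k) = ENNReal.ofReal (1 - a ^ (k + 1)) := by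
  rw [← ofReal_integral_eq_lintegral_ofReal, ← integral_Ioc_eq_integral_Ioo,
    ← intervalIntegral.integral_of_le ha₁, intervalIntegral.integral_const_mul, integral_pow]
  · field_simp
    simp
  · exact (by fun_prop : Continuous fun v : ℝ => (k + 1) * v ^ k).integrableOn_Icc.mono_set
      Ioo_subset_Icc_self
  · filter_upwards [ae_restrict_mem measurableSet_Ioo] with v hv
    have := ha₀.trans hv.1.le
    simp only [Pi.zero_apply]; positivity

/-- `λ {x > 0 | F x < v} = inf {x ≥ 0 | F x ≥ v}` is the quantile function of the positive part of
a random variable with distribution function `F`; in this form Tonelli applies directly. -/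
noncomputable def posQuantile (μ : Measure ℝ) (v : ℝ) : ℝ :=
  (volume {x | 0 < x ∧ cdf μ x < v}).toReal

namespace posQuantile

variable (μ : Measure ℝ)

lemma nonneg (v : ℝ) : 0 ≤ posQuantile μ v := ENNReal.toReal_nonneg

lemma measurable : Measurable (posQuantile μ) :=
  Measurable.ennreal_toReal <| measurable_measure_prodMk_right <|
    (measurableSet_lt measurable_const measurable_fst).inter
      (measurableSet_lt ((monotone_cdf μ).measurable.comp measurable_fst) measurable_snd)

lemma volume_setOf_ne_top {v : ℝ} (hv : v < 1) : volume {x | 0 < x ∧ cdf μ x < v} ≠ ∞ := by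
  obtain ⟨x₀, hx₀⟩ :=
    ((tendsto_cdf_atTop μ).eventually (eventually_gt_nhds hv)).exists_forall_of_atTop
  refine ne_top_of_le_ne_top (b := volume (Ioo 0 x₀)) (by simp) (measure_mono ?_)
  exact fun x hx => ⟨hx.1, lt_of_not_ge fun h => (hx₀ x h).not_gt hx.2⟩

lemma ofReal_eq {v : ℝ} (hv : v < 1) :
    ENNReal.ofReal (posQuantile μ v) = volume {x | 0 < x ∧ cdf μ x < v} :=
  ENNReal.ofReal_toReal (volume_setOf_ne_top μ hv)

lemma lintegral_one_sub_cdf_pow (k : ℕ) :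
    ∫⁻ x in Ioi 0, ENNReal.ofReal (1 - cdf μ x ^ (k + 1))
      = ∫⁻ v in Ioo 0 1, ENNReal.ofReal ((k + 1) * v ^ k * posQuantile μ v) := by
  calc ∫⁻ x in Ioi 0, ENNReal.ofReal (1 - cdf μ x ^ (k + 1))
      = ∫⁻ x in Ioi 0, 1 * ∫⁻ v in Ioo (cdf μ x) 1, ENNReal.ofReal ((k + 1) * v ^ k) := by
        simp_rw [one_mul, lintegral_Ioo_ofReal_succ_mul_pow (cdf_nonneg μ _) (cdf_le_one μ _)]
    _ = ∫⁻ v in Ioo 0 1,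
          ENNReal.ofReal ((k + 1) * v ^ k) * ∫⁻ x in {x | 0 < x ∧ cdf μ x < v}, 1 :=
        lintegral_Ioi_mul_lintegral_Ioo_eq (monotone_cdf μ).measurable (cdf_nonneg μ)
          measurable_const (by fun_prop)
    _ = ∫⁻ v in Ioo 0 1, ENNReal.ofReal ((k + 1) * v ^ k * posQuantile μ v) := by
        refine setLIntegral_congr_fun measurableSet_Ioo fun v hv => ?_
        have := hv.1.le
        rw [setLIntegral_one, ← ofReal_eq μ hv.2, ← ENNReal.ofReal_mul (by positivity)]

lemma lintegral_two_mul_one_sub_cdf :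
    ∫⁻ x in Ioi 0, ENNReal.ofReal (2 * x * (1 - cdf μ x))
      = ∫⁻ v in Ioo 0 1, ENNReal.ofReal (posQuantile μ v ^ 2) := by
  calc ∫⁻ x in Ioi 0, ENNReal.ofReal (2 * x * (1 - cdf μ x))
      = ∫⁻ x in Ioi 0, ENNReal.ofReal (2 * x) * ∫⁻ _ in Ioo (cdf μ x) 1, 1 := by
        refine setLIntegral_congr_fun measurableSet_Ioi fun x hx => ?_
        rw [setLIntegral_one, Real.volume_Ioo, ← ENNReal.ofReal_mul (by linarith [mem_Ioi.1 hx])]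
    _ = ∫⁻ v in Ioo 0 1, 1 * ∫⁻ x in {x | 0 < x ∧ cdf μ x < v}, ENNReal.ofReal (2 * x) :=
        lintegral_Ioi_mul_lintegral_Ioo_eq (monotone_cdf μ).measurable (cdf_nonneg μ)
          (by fun_prop) measurable_const
    _ = ∫⁻ v in Ioo 0 1, ENNReal.ofReal (posQuantile μ v ^ 2) := by
        refine setLIntegral_congr_fun measurableSet_Ioo fun v hv => ?_
        have hlower : ∀ x ∈ {x | 0 < x ∧ cdf μ x < v}, Ioo 0 x ⊆ {x | 0 < x ∧ cdf μ x < v} :=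
          fun x hx y hy => ⟨hy.1, (monotone_cdf μ hy.2.le).trans_lt hx.2⟩
        rw [one_mul, lintegral_ofReal_two_mul_eq_sq (fun x hx => hx.1) hlower
          (volume_setOf_ne_top μ hv.2), ENNReal.ofReal_pow (nonneg μ v), ofReal_eq μ hv.2]

lemma integral_one_sub_cdf_pow (k : ℕ) :
    ∫ x in Ioi 0, (1 - cdf μ x ^ (k + 1))
      = ∫ v in Ioo 0 1, (k + 1) * v ^ k * posQuantile μ v := by
  have := (monotone_cdf μ).measurable
  have := measurable μ
  refine integral_eq_integral_of_lintegral_ofReal_eq ?_ ?_ (by fun_prop) (by fun_prop)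
    (lintegral_one_sub_cdf_pow μ k)
  · exact ae_of_all _ fun x => sub_nonneg.2 (pow_le_one₀ (cdf_nonneg μ x) (cdf_le_one μ x))
  · filter_upwards [ae_restrict_mem measurableSet_Ioo] with v hv
    have := hv.1.le
    have := nonneg μ v
    simp only [Pi.zero_apply]; positivity

lemma integral_two_mul_one_sub_cdf :
    ∫ x in Ioi 0, 2 * x * (1 - cdf μ x) = ∫ v in Ioo 0 1, posQuantile μ v ^ 2 := by
  have := (monotone_cdf μ).measurable
  have := measurable μ
  refine integral_eq_integral_of_lintegral_ofReal_eq ?_ (ae_of_all _ fun v => sq_nonneg _)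
    (by fun_prop) (by fun_prop) (lintegral_two_mul_one_sub_cdf μ)
  filter_upwards [ae_restrict_mem measurableSet_Ioi] with x hx
  have := cdf_le_one μ x
  have := mem_Ioi.1 hx
  simp only [Pi.zero_apply]; nlinarith

lemma memLp_two (hmom2 : IntegrableOn (fun x => 2 * x * (1 - cdf μ x)) (Ioi 0)) :
    MemLp (posQuantile μ) 2 (volume.restrict (Ioo 0 1)) := by
  have hm := (measurable μ).aestronglyMeasurable (μ := volume.restrict (Ioo 0 1))
  exact (memLp_two_iff_integrable_sq hm).2 <| integrable_of_lintegral_ofReal_eq hmom2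
    (ae_of_all _ fun v => sq_nonneg _) (hm.pow 2) (lintegral_two_mul_one_sub_cdf μ)

end posQuantile

instance : IsProbabilityMeasure (volume.restrict (Ioo (0 : ℝ) 1)) := ⟨by simp⟩

lemma integral_Ioo_zero_one_pow (j : ℕ) : ∫ v in Ioo (0 : ℝ) 1, v ^ j = 1 / (j + 1) := by
  rw [← integral_Ioc_eq_integral_Ioo, ← intervalIntegral.integral_of_le zero_le_one, integral_pow]
  simp

lemma memLp_succ_mul_pow (k : ℕ) :
    MemLp (fun v : ℝ => (k + 1) * v ^ k) 2 (volume.restrict (Ioo 0 1)) :=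
  (memLp_two_iff_integrable_sq (by fun_prop)).2 <|
    (by fun_prop : Continuous fun v : ℝ => ((k + 1) * v ^ k) ^ 2).integrableOn_Icc.mono_set
      Ioo_subset_Icc_self

lemma integral_succ_mul_pow (k : ℕ) : ∫ v in Ioo (0 : ℝ) 1, (k + 1) * v ^ k = 1 := by
  rw [integral_const_mul, integral_Ioo_zero_one_pow]
  field_simp

lemma variance_succ_mul_pow (k : ℕ) :
    Var[fun v : ℝ => (k + 1) * v ^ k; volume.restrict (Ioo 0 1)] = k ^ 2 / (2 * k + 1) := by
  rw [variance_eq_sub (memLp_succ_mul_pow k), integral_succ_mul_pow]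
  simp only [Pi.pow_apply, mul_pow, ← pow_mul, integral_const_mul, integral_Ioo_zero_one_pow]
  push_cast
  field_simp
  ring

theorem max_order_stat_le_hartley_david_gumbel_general
    (μ : Measure ℝ)
    (hmom2 : IntegrableOn (fun x => 2 * x * (1 - cdf μ x)) (Set.Ioi 0) volume)
    (m σ : ℝ) (hm : m = ∫ x in Set.Ioi (0 : ℝ), (1 - cdf μ x))
    (hσ : σ = Real.sqrt ((∫ x in Set.Ioi (0 : ℝ), 2 * x * (1 - cdf μ x)) - m ^ 2)) :
    ∀ n : ℕ, 1 ≤ n →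
      (∫ x in Set.Ioi (0 : ℝ), (1 - (cdf μ x) ^ n))
        ≤ σ * ((n : ℝ) - 1) / Real.sqrt (2 * (n : ℝ) - 1) + m := by
  intro n hn
  obtain ⟨k, rfl⟩ := Nat.exists_eq_add_of_le' hn
  set ν := volume.restrict (Ioo (0 : ℝ) 1)
  have hQ := posQuantile.memLp_two μ hmom2
  have hmean : ν[posQuantile μ] = m := by
    simpa [hm] using (posQuantile.integral_one_sub_cdf_pow μ 0).symm
  have hcov : cov[fun v : ℝ => (k + 1) * v ^ k, posQuantile μ; ν]
      = (∫ x in Ioi 0, (1 - cdf μ x ^ (k + 1))) - m := by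
    rw [covariance_eq_sub (memLp_succ_mul_pow k) hQ, integral_succ_mul_pow, hmean,
      posQuantile.integral_one_sub_cdf_pow]
    simp only [Pi.mul_apply, one_mul]
  have hvar : Var[posQuantile μ; ν] = (∫ x in Ioi 0, 2 * x * (1 - cdf μ x)) - m ^ 2 := by
    rw [variance_eq_sub hQ, hmean, posQuantile.integral_two_mul_one_sub_cdf]
    rfl
  calc ∫ x in Ioi 0, (1 - cdf μ x ^ (k + 1))
      = cov[fun v : ℝ => (k + 1) * v ^ k, posQuantile μ; ν] + m := by rw [hcov]; ring
    _ ≤ √Var[fun v : ℝ => (k + 1) * v ^ k; ν] * √Var[posQuantile μ; ν] + m := by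
      gcongr
      exact covariance_le_sqrt_variance_mul_sqrt_variance (memLp_succ_mul_pow k) hQ
    _ = σ * ((↑(k + 1) : ℝ) - 1) / √(2 * (↑(k + 1) : ℝ) - 1) + m := by
      rw [variance_succ_mul_pow, hvar, ← hσ, Real.sqrt_div' _ (by positivity),
        Real.sqrt_sq (Nat.cast_nonneg k)]
      push_cast
      ring_nf

/-- **Hartley–David–Gumbel bound.** For a nonnegative random variable with cdf
`F = cdf μ`, finite mean `m = ∫₀^∞ (1 - F x) dx` and finite variance
`σ² = ∫₀^∞ 2x (1 - F x) dx - m²`, the mean `μ_{n:n} = ∫₀^∞ (1 - (F x)^n) dx` of the largest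
order statistic of a sample of size `n ≥ 1` satisfies `μ_{n:n} ≤ σ (n-1)/√(2n-1) + m`. -/
theorem max_order_stat_le_hartley_david_gumbel
    (μ : Measure ℝ) [IsProbabilityMeasure μ] (hnonneg : μ (Set.Iio 0) = 0)
    (hmean : IntegrableOn (fun x => 1 - cdf μ x) (Set.Ioi 0) volume)
    (hmom2 : IntegrableOn (fun x => 2 * x * (1 - cdf μ x)) (Set.Ioi 0) volume)
    (m σ : ℝ) (hm : m = ∫ x in Set.Ioi (0 : ℝ), (1 - cdf μ x))
    (hσ : σ = Real.sqrt ((∫ x in Set.Ioi (0 : ℝ), 2 * x * (1 - cdf μ x)) - m ^ 2)) :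
    ∀ n : ℕ, 1 ≤ n →
      (∫ x in Set.Ioi (0 : ℝ), (1 - (cdf μ x) ^ n))
        ≤ σ * ((n : ℝ) - 1) / Real.sqrt (2 * (n : ℝ) - 1) + m :=
  max_order_stat_le_hartley_david_gumbel_general μ hmom2 m σ hm hσ
end

section
/- Let X be a nonnegative random variable with cumulative distribution function F and finite mean E[X] = ∫₀^∞ (1 − F(x)) dx. Then for every m ∈ ℕ, the cumulative residual entropy of X satisfies the lower bound 𝓔(X) ≥ Σ_{n=1}^m μ_{n+1:n+1}/(n(n+1)) − E[X]. -/
open MeasureTheory ProbabilityTheory Set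
open scoped ENNReal

/-! Writing `1 / ((n+1)(n+2)) = 1/(n+1) - 1/(n+2)` and summing by parts, the partial sums of
`∑ (1 - p^(n+2)) / ((n+1)(n+2))` are `(1 - p) (1 + ∑_{n<m} p^(n+1)/(n+1))` minus a nonnegative
remainder, and `∑ p^(n+1)/(n+1) = -log (1 - p)`. Hence, pointwise in `p = F x`,
`∑_{n<m} (1 - F^(n+2)) / ((n+1)(n+2)) ≤ -(1 - F) log (1 - F) + (1 - F)`, and integrating over
`(0, ∞)` gives the bound. -/

lemma sum_one_sub_pow_div_mul_eq (p : ℝ) (m : ℕ) :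
    ∑ n ∈ Finset.range m, (1 - p ^ (n + 2)) / (((n : ℝ) + 1) * ((n : ℝ) + 2))
      = (1 - p) * (1 + ∑ n ∈ Finset.range m, p ^ (n + 1) / ((n : ℝ) + 1))
        - (1 - p ^ (m + 1)) / ((m : ℝ) + 1) := by
  induction m with
  | zero => simp
  | succ m ih =>
    rw [Finset.sum_range_succ, ih, Finset.sum_range_succ]
    push_cast
    field_simp
    ring

lemma sum_pow_div_le_neg_log_one_sub {p : ℝ} (hp0 : 0 ≤ p) (hp1 : p < 1) (m : ℕ) :
    ∑ n ∈ Finset.range m, p ^ (n + 1) / ((n : ℝ) + 1) ≤ -Real.log (1 - p) :=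
  sum_le_hasSum _ (fun _ _ => by positivity)
    (Real.hasSum_pow_div_log_of_abs_lt_one (by rwa [abs_of_nonneg hp0]))

lemma sum_one_sub_pow_div_mul_le {p : ℝ} (hp0 : 0 ≤ p) (hp1 : p ≤ 1) (m : ℕ) :
    ∑ n ∈ Finset.range m, (1 - p ^ (n + 2)) / (((n : ℝ) + 1) * ((n : ℝ) + 2))
      ≤ Real.negMulLog (1 - p) + (1 - p) := by
  have hremainder : 0 ≤ (1 - p ^ (m + 1)) / ((m : ℝ) + 1) :=
    div_nonneg (sub_nonneg.2 (pow_le_one₀ hp0 hp1)) (by positivity)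
  have hseries : (1 - p) * (1 + ∑ n ∈ Finset.range m, p ^ (n + 1) / ((n : ℝ) + 1))
      ≤ (1 - p) * (1 - Real.log (1 - p)) := by
    rcases hp1.lt_or_eq with hp1 | rfl
    · have := sum_pow_div_le_neg_log_one_sub hp0 hp1 m
      gcongr
      linarith
    · simp
  rw [sum_one_sub_pow_div_mul_eq, Real.negMulLog]
  linarith

lemma sum_ofReal_one_sub_pow_div_mul_le {p : ℝ} (hp0 : 0 ≤ p) (hp1 : p ≤ 1) (m : ℕ) :
    ∑ n ∈ Finset.range m,
        ENNReal.ofReal (1 - p ^ (n + 2)) / (((n : ℝ≥0∞) + 1) * ((n : ℝ≥0∞) + 2))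
      ≤ ENNReal.ofReal (-((1 - p) * Real.log (1 - p))) + ENNReal.ofReal (1 - p) := by
  have hterm (n : ℕ) :
      ENNReal.ofReal (1 - p ^ (n + 2)) / (((n : ℝ≥0∞) + 1) * ((n : ℝ≥0∞) + 2))
        = ENNReal.ofReal ((1 - p ^ (n + 2)) / (((n : ℝ) + 1) * ((n : ℝ) + 2))) := by
    rw [ENNReal.ofReal_div_of_pos (by positivity)]
    congr
    exact_mod_cast (ENNReal.ofReal_natCast ((n + 1) * (n + 2))).symm
  simp_rw [hterm]
  rw [← ENNReal.ofReal_sum_of_nonneg fun n _ =>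
      div_nonneg (sub_nonneg.2 (pow_le_one₀ hp0 hp1)) (by positivity),
    ← neg_mul, ← Real.negMulLog,
    ← ENNReal.ofReal_add (Real.negMulLog_nonneg (by linarith) (by linarith)) (by linarith)]
  exact ENNReal.ofReal_le_ofReal (sum_one_sub_pow_div_mul_le hp0 hp1 m)

theorem finite_sum_max_order_stats_le_cre_add_mean_general
    (μ : Measure ℝ) :
    ∀ m : ℕ,
      ∑ n ∈ Finset.range m,
          (∫⁻ x in Set.Ioi (0 : ℝ), ENNReal.ofReal (1 - (cdf μ x) ^ (n + 2)))
            / (((n : ℝ≥0∞) + 1) * ((n : ℝ≥0∞) + 2))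
        ≤ (∫⁻ x in Set.Ioi (0 : ℝ),
              ENNReal.ofReal (-((1 - cdf μ x) * Real.log (1 - cdf μ x))))
            + ∫⁻ x in Set.Ioi (0 : ℝ), ENNReal.ofReal (1 - cdf μ x) := by
  intro m
  have hF : Measurable (cdf μ) := (cdf μ).mono.measurable
  calc ∑ n ∈ Finset.range m,
          (∫⁻ x in Set.Ioi (0 : ℝ), ENNReal.ofReal (1 - (cdf μ x) ^ (n + 2)))
            / (((n : ℝ≥0∞) + 1) * ((n : ℝ≥0∞) + 2))
      = ∫⁻ x in Set.Ioi (0 : ℝ), ∑ n ∈ Finset.range m,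
          ENNReal.ofReal (1 - (cdf μ x) ^ (n + 2))
            / (((n : ℝ≥0∞) + 1) * ((n : ℝ≥0∞) + 2)) := by
        rw [lintegral_finsetSum _ fun n _ => by fun_prop]
        refine Finset.sum_congr rfl fun n _ => ?_
        simp_rw [div_eq_mul_inv]
        rw [lintegral_mul_const' _ _ (by simp)]
    _ ≤ ∫⁻ x in Set.Ioi (0 : ℝ),
          (ENNReal.ofReal (-((1 - cdf μ x) * Real.log (1 - cdf μ x)))
            + ENNReal.ofReal (1 - cdf μ x)) :=
        lintegral_mono fun x =>
          sum_ofReal_one_sub_pow_div_mul_le (cdf_nonneg μ x) (cdf_le_one μ x) m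
    _ = _ := lintegral_add_left (by fun_prop) _

/-- For a nonnegative random variable with cdf `F = cdf μ` and finite mean
`E[X] = ∫₀^∞ (1 - F x) dx`, for every `m ∈ ℕ` the cumulative residual entropy satisfies the
lower bound `𝓔(X) ≥ ∑_{n=1}^m μ_{n+1:n+1} / (n (n+1)) - E[X]`, i.e. (in `[0, ∞]`)
`∑_{n=1}^m μ_{n+1:n+1} / (n (n+1)) ≤ 𝓔(X) + E[X]`, where
`μ_{k:k} = ∫₀^∞ (1 - (F x)^k) dx` is the mean of the largest order statistic. -/
theorem finite_sum_max_order_stats_le_cre_add_mean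
    (μ : Measure ℝ) [IsProbabilityMeasure μ] (hnonneg : μ (Set.Iio 0) = 0)
    (hmean : ∫⁻ x in Set.Ioi (0 : ℝ), ENNReal.ofReal (1 - cdf μ x) ≠ ⊤) :
    ∀ m : ℕ,
      ∑ n ∈ Finset.range m,
          (∫⁻ x in Set.Ioi (0 : ℝ), ENNReal.ofReal (1 - (cdf μ x) ^ (n + 2)))
            / (((n : ℝ≥0∞) + 1) * ((n : ℝ≥0∞) + 2))
        ≤ (∫⁻ x in Set.Ioi (0 : ℝ),
              ENNReal.ofReal (-((1 - cdf μ x) * Real.log (1 - cdf μ x))))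
            + ∫⁻ x in Set.Ioi (0 : ℝ), ENNReal.ofReal (1 - cdf μ x) :=
  finite_sum_max_order_stats_le_cre_add_mean_general μ
end

section
/- Let X be a nonnegative random variable with cumulative distribution function F, finite mean μ = ∫₀^∞ (1 − F(x)) dx and finite variance σ² = ∫₀^∞ 2x(1 − F(x)) dx − μ². Then the sum of the cumulative residual entropy and the cumulative entropy of X satisfies 𝓔(X) + 𝓒𝓔(X) ≤ √2 σ Σ_{n=1}^∞ 1/(n√(n+1)). -/
set_option linter.unusedSectionVars false
set_option linter.unusedVariables false
set_option maxHeartbeats 1000000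

open MeasureTheory ProbabilityTheory Set

namespace CRE12
open Filter intervalIntegral Topology
open scoped ENNReal NNReal



noncomputable def qf (μ : Measure ℝ) (u : ℝ) : ℝ :=
  if u ∈ Set.Ioo (0:ℝ) 1 then sInf {x | u ≤ cdf μ x} else 0

variable {μ : Measure ℝ} [IsProbabilityMeasure μ]

lemma cdf_neg (hnonneg : μ (Set.Iio 0) = 0) {x : ℝ} (hx : x < 0) : cdf μ x = 0 := by
  rw [cdf_eq_real, measureReal_def]
  have : μ (Iic x) ≤ μ (Iio 0) := measure_mono (Iic_subset_Iio.mpr hx)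
  rw [hnonneg] at this
  simp [le_antisymm this zero_le]

lemma S_nonempty {u : ℝ} (hu : u < 1) : {x | u ≤ cdf μ x}.Nonempty := by
  have h := (tendsto_cdf_atTop μ).eventually (eventually_ge_nhds hu)
  exact h.exists

lemma S_subset (hnonneg : μ (Set.Iio 0) = 0) {u : ℝ} (hu : 0 < u) :
    {x | u ≤ cdf μ x} ⊆ Ici 0 := by
  intro x hx
  by_contra hneg
  change ¬ x ∈ Ici 0 at hneg
  rw [mem_Ici] at hneg
  have := cdf_neg hnonneg (not_le.mp (by simpa using hneg))
  simp only [mem_setOf_eq, this] at hx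
  linarith

lemma S_bddBelow (hnonneg : μ (Set.Iio 0) = 0) {u : ℝ} (hu : 0 < u) :
    BddBelow {x | u ≤ cdf μ x} :=
  ⟨0, fun x hx => S_subset hnonneg hu hx⟩

lemma qf_nonneg (hnonneg : μ (Set.Iio 0) = 0) (u : ℝ) : 0 ≤ qf μ u := by
  unfold qf
  split_ifs with h
  · exact le_csInf (S_nonempty h.2) (fun x hx => S_subset hnonneg h.1 hx)
  · exact le_refl 0

lemma le_cdf_qf (hnonneg : μ (Set.Iio 0) = 0) {u : ℝ} (hu : u ∈ Set.Ioo (0:ℝ) 1) :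
    u ≤ cdf μ (qf μ u) := by
  have hq : qf μ u = sInf {x | u ≤ cdf μ x} := if_pos hu
  set q := qf μ u with hqdef
  have hgt : ∀ y, q < y → u ≤ cdf μ y := by
    intro y hy
    rw [hq] at hy
    obtain ⟨x, hx, hxy⟩ := (csInf_lt_iff (S_bddBelow hnonneg hu.1) (S_nonempty hu.2)).mp hy
    exact le_trans hx (monotone_cdf μ hxy.le)
  have hrc : ContinuousWithinAt (cdf μ) (Ici q) q := (cdf μ).right_continuous q
  have htend : Tendsto (cdf μ) (nhdsWithin q (Ioi q)) (nhds (cdf μ q)) :=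
    hrc.tendsto.mono_left (nhdsWithin_mono q Ioi_subset_Ici_self)
  refine ge_of_tendsto htend ?_
  filter_upwards [self_mem_nhdsWithin] with y hy
  exact hgt y hy

lemma qf_le_iff (hnonneg : μ (Set.Iio 0) = 0) {u : ℝ} (hu : u ∈ Set.Ioo (0:ℝ) 1) (x : ℝ) :
    qf μ u ≤ x ↔ u ≤ cdf μ x := by
  constructor
  · intro h
    exact le_trans (le_cdf_qf hnonneg hu) (monotone_cdf μ h)
  · intro h
    rw [qf, if_pos hu]
    exact csInf_le (S_bddBelow hnonneg hu.1) h

lemma lt_qf_iff (hnonneg : μ (Set.Iio 0) = 0) {u : ℝ} (hu : u ∈ Set.Ioo (0:ℝ) 1) (x : ℝ) :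
    x < qf μ u ↔ cdf μ x < u := by
  rw [← not_le, ← not_le, qf_le_iff hnonneg hu]

lemma measurable_qf (hnonneg : μ (Set.Iio 0) = 0) : Measurable (qf μ) := by
  apply measurable_of_Iic
  intro t
  rcases lt_or_ge t 0 with ht | ht
  · have : qf μ ⁻¹' Iic t = ∅ := by
      ext u
      simp only [mem_preimage, mem_Iic, mem_empty_iff_false, iff_false, not_le]
      exact lt_of_lt_of_le ht (qf_nonneg hnonneg u)
    rw [this]; exact MeasurableSet.empty
  · have : qf μ ⁻¹' Iic t = (Ioo (0:ℝ) 1 ∩ Iic (cdf μ t)) ∪ (Ioo (0:ℝ) 1)ᶜ := by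
      ext u
      by_cases hu : u ∈ Ioo (0:ℝ) 1
      · simp only [mem_preimage, mem_Iic, mem_union, mem_inter_iff, hu, true_and, mem_compl_iff,
          not_true, or_false]
        exact qf_le_iff hnonneg hu t
      · simp only [mem_preimage, mem_Iic, mem_union, mem_inter_iff, hu, false_and, mem_compl_iff,
          not_false_iff, or_true, iff_true]
        rw [qf, if_neg hu]
        exact ht
    rw [this]
    exact ((measurableSet_Ioo.inter measurableSet_Iic).union measurableSet_Ioo.compl)





noncomputable def lf (u : ℝ) : ℝ := Real.log u - Real.log (1 - u)

lemma inv_succ_pos (n : ℕ) : (0:ℝ) < 1/(n+1) := by positivity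

lemma inv_succ_le_one (n : ℕ) : (1/(n+1):ℝ) ≤ 1 := by
  rw [div_le_one (by positivity)]
  have : (0:ℝ) ≤ (n:ℝ) := Nat.cast_nonneg n
  linarith

lemma neg_log_le {u : ℝ} (h0 : 0 < u) (h1 : u ≤ 1) : -Real.log u ≤ 2 * u ^ (-(1/2) : ℝ) := by
  have h : Real.log (u ^ (-(1/2) : ℝ)) = -(1/2) * Real.log u := Real.log_rpow h0 _
  have h2 : Real.log (u ^ (-(1/2) : ℝ)) ≤ u ^ (-(1/2) : ℝ) - 1 :=
    Real.log_le_sub_one_of_pos (Real.rpow_pos_of_pos h0 _)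
  nlinarith [Real.rpow_pos_of_pos h0 (-(1/2) : ℝ)]

lemma logsq_le {u : ℝ} (h0 : 0 < u) (h1 : u ≤ 1) :
    (Real.log u) ^ 2 ≤ 16 * u ^ (-(1/2) : ℝ) := by
  have h : Real.log (u ^ (-(1/4) : ℝ)) = -(1/4) * Real.log u := Real.log_rpow h0 _
  have h2 : Real.log (u ^ (-(1/4) : ℝ)) ≤ u ^ (-(1/4) : ℝ) - 1 :=
    Real.log_le_sub_one_of_pos (Real.rpow_pos_of_pos h0 _)
  have h3 : (u ^ (-(1/4) : ℝ)) ^ 2 = u ^ (-(1/2) : ℝ) := by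
    rw [← Real.rpow_natCast (u ^ (-(1/4):ℝ)) 2, ← Real.rpow_mul h0.le]
    norm_num
  have h4 : 0 ≤ -Real.log u := by
    simpa using Real.log_nonpos h0.le h1
  have h5 : 0 < u ^ (-(1/4) : ℝ) := Real.rpow_pos_of_pos h0 _
  have h6 : -Real.log u ≤ 4 * u ^ (-(1/4) : ℝ) := by nlinarith
  calc (Real.log u) ^ 2 = (-Real.log u) ^ 2 := by ring
    _ ≤ (4 * u ^ (-(1/4) : ℝ)) ^ 2 := by nlinarith
    _ = 16 * u ^ (-(1/2) : ℝ) := by rw [mul_pow, ← h3]; ring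

lemma integrableOn_rpow_half : IntegrableOn (fun u : ℝ => u ^ (-(1/2) : ℝ)) (Ioo 0 1) := by
  have h := intervalIntegral.intervalIntegrable_rpow' (a := 0) (b := 1)
    (by norm_num : (-1:ℝ) < -(1/2))
  rw [intervalIntegrable_iff_integrableOn_Ioc_of_le zero_le_one] at h
  exact h.mono_set Ioo_subset_Ioc_self

lemma integrableOn_log01 : IntegrableOn Real.log (Ioo (0:ℝ) 1) := by
  refine Integrable.mono (integrableOn_rpow_half.const_mul 2) ?_ ?_
  · exact (Real.measurable_log.aestronglyMeasurable).restrict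
  · filter_upwards [ae_restrict_mem measurableSet_Ioo] with u hu
    have hu0 : 0 < u := hu.1
    have h := neg_log_le hu.1 hu.2.le
    have hl : Real.log u ≤ 0 := Real.log_nonpos hu.1.le hu.2.le
    rw [Real.norm_eq_abs, Real.norm_eq_abs, abs_of_nonpos hl,
      abs_of_nonneg (by positivity : (0:ℝ) ≤ 2 * u ^ (-(1/2) : ℝ))]
    exact h

lemma integrableOn_logsq01 : IntegrableOn (fun u => (Real.log u)^2) (Ioo (0:ℝ) 1) := by
  refine Integrable.mono (integrableOn_rpow_half.const_mul 16) ?_ ?_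
  · exact ((Real.measurable_log.pow_const 2).aestronglyMeasurable).restrict
  · filter_upwards [ae_restrict_mem measurableSet_Ioo] with u hu
    have hu0 : 0 < u := hu.1
    have h := logsq_le hu.1 hu.2.le
    rw [Real.norm_eq_abs, Real.norm_eq_abs, abs_of_nonneg (sq_nonneg _),
      abs_of_nonneg (by positivity : (0:ℝ) ≤ 16 * u ^ (-(1/2) : ℝ))]
    exact h

lemma J_ftc {t : ℝ} (ht : 0 < t) (ht1 : t ≤ 1) :
    ∫ u in t..1, Real.log u = t - t * Real.log t - 1 := by
  have h : ∀ u ∈ Set.uIcc t 1, HasDerivAt (fun x => x * Real.log x - x) (Real.log u) u := by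
    intro u hu
    rw [Set.uIcc_of_le ht1] at hu
    have hu0 : u ≠ 0 := ne_of_gt (lt_of_lt_of_le ht hu.1)
    have h1 := Real.hasDerivAt_mul_log hu0
    have h2 := (h1.sub (hasDerivAt_id u))
    simpa [Pi.sub_def] using h2
  have hint : IntervalIntegrable Real.log volume t 1 := by
    apply ContinuousOn.intervalIntegrable
    apply Real.continuousOn_log.mono
    intro u hu
    rw [Set.uIcc_of_le ht1] at hu
    simp only [mem_compl_iff, mem_singleton_iff]
    have := hu.1; intro h0; rw [h0] at this; linarith
  have := intervalIntegral.integral_eq_sub_of_hasDerivAt h hint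
  rw [this]
  simp [Real.log_one]
  ring

lemma J2_ftc {t : ℝ} (ht : 0 < t) (ht1 : t ≤ 1) :
    ∫ u in t..1, (Real.log u)^2 = 2 - t * (Real.log t)^2 + 2 * t * Real.log t - 2 * t := by
  have h : ∀ u ∈ Set.uIcc t 1, HasDerivAt
      (fun x => x * (Real.log x)^2 - 2 * (x * Real.log x) + 2 * x) ((Real.log u)^2) u := by
    intro u hu
    rw [Set.uIcc_of_le ht1] at hu
    have hu0 : 0 < u := lt_of_lt_of_le ht hu.1
    have hlog : HasDerivAt Real.log (1/u) u := by
      simpa [one_div] using Real.hasDerivAt_log (ne_of_gt hu0)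
    have hsq : HasDerivAt (fun x => (Real.log x)^2) (2 * Real.log u * (1/u)) u := by
      simpa [Function.comp_def] using ((hasDerivAt_pow 2 (Real.log u)).comp u hlog)
    have h1 : HasDerivAt (fun x => x * (Real.log x)^2)
        (1 * (Real.log u)^2 + u * (2 * Real.log u * (1/u))) u :=
      (hasDerivAt_id u).mul hsq
    have h2 := Real.hasDerivAt_mul_log (ne_of_gt hu0)
    have h3 := (h1.sub ((h2.const_mul 2))).add ((hasDerivAt_id u).const_mul 2)
    refine HasDerivAt.congr_deriv h3 ?_
    field_simp
    ring
  have hint : IntervalIntegrable (fun u => (Real.log u)^2) volume t 1 := by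
    apply ContinuousOn.intervalIntegrable
    apply ContinuousOn.pow
    apply Real.continuousOn_log.mono
    intro u hu
    rw [Set.uIcc_of_le ht1] at hu
    simp only [mem_compl_iff, mem_singleton_iff]
    have := hu.1; intro h0; rw [h0] at this; linarith
  have := intervalIntegral.integral_eq_sub_of_hasDerivAt h hint
  rw [this]
  simp [Real.log_one]
  ring




lemma union_Ioo : (⋃ n : ℕ, Ioo (1/(n+1) : ℝ) 1) = Ioo (0:ℝ) 1 := by
  ext x
  simp only [mem_iUnion, mem_Ioo]
  constructor
  · rintro ⟨n, h1, h2⟩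
    exact ⟨lt_trans (by positivity) h1, h2⟩
  · rintro ⟨h1, h2⟩
    obtain ⟨n, hn⟩ := exists_nat_one_div_lt h1
    exact ⟨n, by exact_mod_cast hn, h2⟩

lemma tendsto_Ioo_integral (f : ℝ → ℝ) (hf : IntegrableOn f (Ioo (0:ℝ) 1)) :
    Tendsto (fun n : ℕ => ∫ u in Ioo (1/(n+1) : ℝ) 1, f u) atTop
      (𝓝 (∫ u in Ioo (0:ℝ) 1, f u)) := by
  have hmono : Monotone (fun n : ℕ => Ioo (1/(n+1) : ℝ) 1) := by
    intro a b hab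
    apply Ioo_subset_Ioo_left
    apply one_div_le_one_div_of_le (by positivity)
    have h : (a:ℝ) ≤ (b:ℝ) := Nat.cast_le.mpr hab
    linarith
  have := tendsto_setIntegral_of_monotone (fun n : ℕ => measurableSet_Ioo) hmono
    (by rw [union_Ioo]; exact hf)
  rwa [union_Ioo] at this

lemma interval_eq_Ioo {t : ℝ} (ht : 0 ≤ t) (ht1 : t ≤ 1) (f : ℝ → ℝ) :
    ∫ u in t..1, f u = ∫ u in Ioo t 1, f u := by
  rw [intervalIntegral.integral_of_le ht1, MeasureTheory.integral_Ioc_eq_integral_Ioo]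

lemma J0 : ∫ u in Ioo (0:ℝ) 1, Real.log u = -1 := by
  have h1 := tendsto_Ioo_integral Real.log integrableOn_log01
  have h2 : Tendsto (fun n : ℕ => ∫ u in Ioo (1/(n+1) : ℝ) 1, Real.log u) atTop (𝓝 (-1)) := by
    have heq : ∀ n : ℕ, ∫ u in Ioo (1/(n+1) : ℝ) 1, Real.log u
        = (1/(n+1):ℝ) - (1/(n+1):ℝ) * Real.log (1/(n+1):ℝ) - 1 := by
      intro n
      rw [← interval_eq_Ioo (inv_succ_pos n).le (inv_succ_le_one n)]
      exact J_ftc (inv_succ_pos n) (inv_succ_le_one n)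
    simp_rw [heq]
    have htend : Tendsto (fun n : ℕ => (1/(n+1) : ℝ)) atTop (𝓝 0) :=
      tendsto_one_div_add_atTop_nhds_zero_nat
    have hml : Tendsto (fun x : ℝ => x - x * Real.log x - 1) (𝓝 0) (𝓝 (-1)) := by
      have hc : Continuous (fun x : ℝ => x - x * Real.log x - 1) :=
        (continuous_id.sub Real.continuous_mul_log).sub continuous_const
      have := hc.tendsto 0
      simpa using this
    exact hml.comp htend
  exact tendsto_nhds_unique h1 h2

lemma J20 : ∫ u in Ioo (0:ℝ) 1, (Real.log u)^2 = 2 := by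
  have h1 := tendsto_Ioo_integral _ integrableOn_logsq01
  have h2 : Tendsto (fun n : ℕ => ∫ u in Ioo (1/(n+1) : ℝ) 1, (Real.log u)^2) atTop (𝓝 2) := by
    have heq : ∀ n : ℕ, ∫ u in Ioo (1/(n+1) : ℝ) 1, (Real.log u)^2
        = 2 - (1/(n+1):ℝ) * (Real.log (1/(n+1):ℝ))^2 + 2 * (1/(n+1):ℝ) * Real.log (1/(n+1):ℝ)
          - 2 * (1/(n+1):ℝ) := by
      intro n
      rw [← interval_eq_Ioo (inv_succ_pos n).le (inv_succ_le_one n)]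
      exact J2_ftc (inv_succ_pos n) (inv_succ_le_one n)
    simp_rw [heq]
    have htend : Tendsto (fun n : ℕ => (1/(n+1) : ℝ)) atTop (𝓝 0) :=
      tendsto_one_div_add_atTop_nhds_zero_nat
    have hml : Tendsto (fun x : ℝ => 2 - x * (Real.log x)^2 + 2 * x * Real.log x - 2*x)
        (𝓝[Ioi 0] 0) (𝓝 2) := by
      have hx2 : Tendsto (fun x : ℝ => x * (Real.log x)^2) (𝓝[Ioi 0] 0) (𝓝 0) := by
        have hs : Tendsto (fun x : ℝ => Real.sqrt x * Real.log (Real.sqrt x)) (𝓝[Ioi 0] 0)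
            (𝓝 0) := by
          have h1 : Tendsto Real.sqrt (𝓝[Ioi 0] 0) (𝓝 0) := by
            have := (Real.continuous_sqrt.tendsto 0)
            simp only [Real.sqrt_zero] at this
            exact this.mono_left nhdsWithin_le_nhds
          have h2 := Real.continuous_mul_log.tendsto 0
          simp only [zero_mul] at h2
          exact h2.comp h1
        have heqx : ∀ x ∈ Ioi (0:ℝ), x * (Real.log x)^2
            = 4 * (Real.sqrt x * Real.log (Real.sqrt x))^2 := by
          intro x hx
          have hx0 : (0:ℝ) < x := hx
          have h1 : Real.log (Real.sqrt x) = Real.log x / 2 := Real.log_sqrt hx0.le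
          have h2 : Real.sqrt x ^ 2 = x := Real.sq_sqrt hx0.le
          have h3 : 4 * (Real.sqrt x * Real.log (Real.sqrt x))^2
              = (Real.sqrt x)^2 * (Real.log x)^2 := by rw [h1]; ring
          rw [h3, h2]
        have h4 : Tendsto (fun x : ℝ => 4 * (Real.sqrt x * Real.log (Real.sqrt x))^2)
            (𝓝[Ioi 0] 0) (𝓝 0) := by
          have := ((hs.mul hs).const_mul (4:ℝ))
          simpa [pow_two] using this
        exact h4.congr' (by filter_upwards [self_mem_nhdsWithin] with x hx
          using (heqx x hx).symm)
      have hx1 : Tendsto (fun x : ℝ => 2 * (x * Real.log x)) (𝓝[Ioi 0] 0) (𝓝 0) := by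
        have h2 := (Real.continuous_mul_log.tendsto 0).mono_left
          (nhdsWithin_le_nhds (s := Ioi (0:ℝ)))
        simpa using h2.const_mul 2
      have hx0 : Tendsto (fun x : ℝ => 2*x) (𝓝[Ioi 0] 0) (𝓝 0) := by
        have hc : Continuous (fun x : ℝ => 2*x) := by continuity
        have := hc.tendsto 0
        simp only [mul_zero] at this
        exact this.mono_left (nhdsWithin_le_nhds (s := Ioi (0:ℝ)))
      have := ((tendsto_const_nhds (α := ℝ) (x := (2:ℝ))).sub hx2).add hx1 |>.sub hx0
      simp only [sub_zero, add_zero] at this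
      convert this using 2 with x
      ring
    have hpos : Tendsto (fun n : ℕ => (1/(n+1) : ℝ)) atTop (𝓝[Ioi 0] 0) := by
      rw [tendsto_nhdsWithin_iff]
      exact ⟨htend, Filter.Eventually.of_forall (fun n => inv_succ_pos n)⟩
    exact hml.comp hpos
  exact tendsto_nhds_unique h1 h2






lemma measurable_lf : Measurable lf :=
  Real.measurable_log.sub (Real.measurable_log.comp (measurable_const.sub measurable_id))

lemma intervalIntegrable_log01 : IntervalIntegrable Real.log volume 0 1 := by
  rw [intervalIntegrable_iff_integrableOn_Ioc_of_le zero_le_one,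
    integrableOn_Ioc_iff_integrableOn_Ioo]
  exact integrableOn_log01

lemma intervalIntegrable_log_sub {t : ℝ} (ht : 0 ≤ t) (ht1 : t ≤ 1) :
    IntervalIntegrable Real.log volume t 1 := by
  rw [intervalIntegrable_iff_integrableOn_Ioc_of_le ht1]
  rw [integrableOn_Ioc_iff_integrableOn_Ioo]
  exact integrableOn_log01.mono_set (Ioo_subset_Ioo_left ht)

lemma intervalIntegrable_log_left {t : ℝ} (ht : 0 ≤ t) (ht1 : t ≤ 1) :
    IntervalIntegrable Real.log volume 0 t := by
  rw [intervalIntegrable_iff_integrableOn_Ioc_of_le ht]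
  rw [integrableOn_Ioc_iff_integrableOn_Ioo]
  exact integrableOn_log01.mono_set (Ioo_subset_Ioo_right ht1)

lemma intervalIntegrable_log1u {t : ℝ} (ht : 0 ≤ t) (ht1 : t ≤ 1) :
    IntervalIntegrable (fun u => Real.log (1 - u)) volume t 1 := by
  have h := (intervalIntegrable_log_left (t := 1 - t) (by linarith) (by linarith)).comp_sub_left 1
  simpa using h.symm

lemma Jval {t : ℝ} (ht : 0 ≤ t) (ht1 : t ≤ 1) :
    ∫ u in t..1, Real.log u = t - t * Real.log t - 1 := by
  rcases eq_or_lt_of_le ht with h | h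
  · rw [← h]
    rw [interval_eq_Ioo le_rfl zero_le_one, J0]
    simp
  · exact J_ftc h ht1

lemma J1u {t : ℝ} (ht : 0 ≤ t) (ht1 : t ≤ 1) :
    ∫ u in t..1, Real.log (1 - u) = -1 - ((1-t) - (1-t) * Real.log (1-t) - 1) := by
  have h := intervalIntegral.integral_comp_sub_left (a := t) (b := 1) Real.log 1
  simp only [sub_self] at h
  rw [h]
  have hadj : (∫ u in (0:ℝ)..(1-t), Real.log u) + ∫ u in (1-t)..1, Real.log u
      = ∫ u in (0:ℝ)..1, Real.log u :=
    intervalIntegral.integral_add_adjacent_intervals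
      (intervalIntegrable_log_left (by linarith) (by linarith))
      (intervalIntegrable_log_sub (by linarith) (by linarith))
  have h01 : ∫ u in (0:ℝ)..1, Real.log u = -1 := by
    have := Jval (t := 0) le_rfl zero_le_one
    simpa using this
  have h1t : ∫ u in (1-t)..1, Real.log u = (1-t) - (1-t) * Real.log (1-t) - 1 :=
    Jval (by linarith) (by linarith)
  linarith

lemma Hpt {t : ℝ} (ht : 0 ≤ t) (ht1 : t ≤ 1) :
    ∫ u in Ioo t 1, lf u = -(t * Real.log t) - (1 - t) * Real.log (1 - t) := by
  rcases eq_or_lt_of_le ht1 with h | h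
  · rw [h]
    simp [Real.log_one]
  · rw [← interval_eq_Ioo ht ht1]
    have hsub : ∫ u in t..1, lf u
        = (∫ u in t..1, Real.log u) - ∫ u in t..1, Real.log (1 - u) :=
      intervalIntegral.integral_sub (intervalIntegrable_log_sub ht ht1)
        (intervalIntegrable_log1u ht ht1)
    rw [hsub, Jval ht ht1, J1u ht ht1]
    ring

lemma integrableOn_log1u : IntegrableOn (fun u => Real.log (1-u)) (Ioo (0:ℝ) 1) := by
  have h := intervalIntegrable_log1u (t := 0) le_rfl zero_le_one
  rw [intervalIntegrable_iff_integrableOn_Ioc_of_le zero_le_one,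
    integrableOn_Ioc_iff_integrableOn_Ioo] at h
  exact h

lemma integrableOn_log1usq : IntegrableOn (fun u => (Real.log (1-u))^2) (Ioo (0:ℝ) 1) := by
  have h0 : IntervalIntegrable (fun u => (Real.log u)^2) volume 0 1 := by
    rw [intervalIntegrable_iff_integrableOn_Ioc_of_le zero_le_one,
      integrableOn_Ioc_iff_integrableOn_Ioo]
    exact integrableOn_logsq01
  have h : IntervalIntegrable (fun u => (Real.log (1-u))^2) volume 0 1 := by
    simpa using (h0.comp_sub_left 1).symm
  rw [intervalIntegrable_iff_integrableOn_Ioc_of_le zero_le_one,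
    integrableOn_Ioc_iff_integrableOn_Ioo] at h
  exact h

lemma int_log1u : ∫ u in Ioo (0:ℝ) 1, Real.log (1-u) = -1 := by
  rw [← interval_eq_Ioo le_rfl zero_le_one]
  have := J1u (t := 0) le_rfl zero_le_one
  simpa using this

lemma int_log1usq : ∫ u in Ioo (0:ℝ) 1, (Real.log (1-u))^2 = 2 := by
  rw [← interval_eq_Ioo le_rfl zero_le_one]
  have h := intervalIntegral.integral_comp_sub_left (a := (0:ℝ)) (b := 1)
    (fun u => (Real.log u)^2) 1
  simp only [sub_self, sub_zero] at h
  rw [h, interval_eq_Ioo le_rfl zero_le_one, J20]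

lemma integrableOn_lf : IntegrableOn lf (Ioo (0:ℝ) 1) :=
  integrableOn_log01.sub integrableOn_log1u

lemma int_lf : ∫ u in Ioo (0:ℝ) 1, lf u = 0 := by
  unfold lf
  rw [integral_sub integrableOn_log01 integrableOn_log1u, J0, int_log1u]
  ring

lemma lf_sq_le (u : ℝ) (h0 : 0 < u) (h1 : u < 1) :
    (lf u)^2 ≤ (Real.log u)^2 + (Real.log (1-u))^2 := by
  have ha : Real.log u ≤ 0 := Real.log_nonpos h0.le h1.le
  have hb : Real.log (1-u) ≤ 0 := Real.log_nonpos (by linarith) (by linarith)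
  unfold lf
  nlinarith [mul_nonneg (neg_nonneg.mpr ha) (neg_nonneg.mpr hb)]

lemma integrableOn_lfsq : IntegrableOn (fun u => (lf u)^2) (Ioo (0:ℝ) 1) := by
  refine Integrable.mono (integrableOn_logsq01.add integrableOn_log1usq) ?_ ?_
  · exact ((measurable_lf.pow_const 2).aestronglyMeasurable).restrict
  · filter_upwards [ae_restrict_mem measurableSet_Ioo] with u hu
    simp only [Pi.add_apply]
    rw [Real.norm_eq_abs, Real.norm_eq_abs, abs_of_nonneg (sq_nonneg _), abs_of_nonneg
      (by positivity : (0:ℝ) ≤ (Real.log u)^2 + (Real.log (1-u))^2)]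
    exact lf_sq_le u hu.1 hu.2

lemma int_lfsq_le : ∫ u in Ioo (0:ℝ) 1, (lf u)^2 ≤ 4 := by
  have h1 : ∫ u in Ioo (0:ℝ) 1, (lf u)^2
      ≤ ∫ u in Ioo (0:ℝ) 1, ((Real.log u)^2 + (Real.log (1-u))^2) := by
    apply setIntegral_mono_on integrableOn_lfsq
      (integrableOn_logsq01.add integrableOn_log1usq) measurableSet_Ioo
    intro u hu
    exact lf_sq_le u hu.1 hu.2
  have h2 : ∫ u in Ioo (0:ℝ) 1, ((Real.log u)^2 + (Real.log (1-u))^2) = 4 := by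
    rw [integral_add integrableOn_logsq01 integrableOn_log1usq, J20, int_log1usq]
    norm_num
  linarith




variable {μ : Measure ℝ} [IsProbabilityMeasure μ]



lemma Iio_inter_Ioi {q : ℝ} : Iio q ∩ Ioi (0:ℝ) = Ioo 0 q := by
  ext x; simp [mem_Ioo, and_comm]

lemma Ioi_inter_Ioo {t : ℝ} (ht : 0 ≤ t) : Ioi t ∩ Ioo (0:ℝ) 1 = Ioo t 1 := by
  ext x
  simp only [mem_inter_iff, mem_Ioi, mem_Ioo]
  constructor
  · rintro ⟨h1, h2, h3⟩; exact ⟨h1, h3⟩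
  · rintro ⟨h1, h2⟩; exact ⟨h1, lt_of_le_of_lt ht h1, h2⟩

lemma setOf_inter_Ioo (hnonneg : μ (Set.Iio 0) = 0) (x : ℝ) :
    {u | x < qf μ u} ∩ Ioo (0:ℝ) 1 = Ioo (cdf μ x) 1 := by
  ext u
  simp only [mem_inter_iff, mem_setOf_eq, mem_Ioo]
  constructor
  · rintro ⟨h1, h2, h3⟩
    exact ⟨(lt_qf_iff hnonneg ⟨h2, h3⟩ x).mp h1, h3⟩
  · rintro ⟨h1, h2⟩
    have hu : u ∈ Ioo (0:ℝ) 1 := ⟨lt_of_le_of_lt (cdf_nonneg μ x) h1, h2⟩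
    exact ⟨(lt_qf_iff hnonneg hu x).mpr h1, hu.1, hu.2⟩

lemma inner_ind_lintegral {q : ℝ} (hq : 0 ≤ q) :
    ∫⁻ x in Ioi (0:ℝ), (if x < q then (1:ℝ≥0∞) else 0) = ENNReal.ofReal q := by
  have h : (fun x : ℝ => if x < q then (1:ℝ≥0∞) else 0)
      = (Iio q).indicator (fun _ => 1) := by
    funext x; simp [Set.indicator_apply, mem_Iio]
  rw [h, lintegral_indicator measurableSet_Iio, Measure.restrict_restrict measurableSet_Iio,
    setLIntegral_one, Iio_inter_Ioi, Real.volume_Ioo, sub_zero]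

lemma int_Ioo_two_x {q : ℝ} (hq : 0 ≤ q) : ∫ x in Ioo (0:ℝ) q, 2 * x = q ^ 2 := by
  rw [← MeasureTheory.integral_Ioc_eq_integral_Ioo, ← integral_of_le hq,
    intervalIntegral.integral_const_mul, integral_id]
  ring

lemma integrableOn_two_x {q : ℝ} : IntegrableOn (fun x : ℝ => 2 * x) (Ioo 0 q) := by
  rcases le_or_gt 0 q with h | h
  · have := ((continuous_const.mul continuous_id : Continuous (fun x:ℝ => 2*x))).intervalIntegrable (μ := volume) 0 q
    rw [intervalIntegrable_iff_integrableOn_Ioc_of_le h,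
      integrableOn_Ioc_iff_integrableOn_Ioo] at this
    exact this
  · rw [Ioo_eq_empty (by linarith)]
    simp

lemma inner_2x_lintegral {q : ℝ} (hq : 0 ≤ q) :
    ∫⁻ x in Ioi (0:ℝ), ENNReal.ofReal (2 * x) * (if x < q then (1:ℝ≥0∞) else 0)
      = ENNReal.ofReal (q ^ 2) := by
  have h : (fun x : ℝ => ENNReal.ofReal (2 * x) * (if x < q then (1:ℝ≥0∞) else 0))
      = (Iio q).indicator (fun x => ENNReal.ofReal (2 * x)) := by
    funext x; simp [Set.indicator_apply, mem_Iio, mul_ite]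
  rw [h, lintegral_indicator measurableSet_Iio, Measure.restrict_restrict measurableSet_Iio,
    Iio_inter_Ioi]
  rw [← MeasureTheory.ofReal_integral_eq_lintegral_ofReal integrableOn_two_x]
  · rw [int_Ioo_two_x hq]
  · filter_upwards [ae_restrict_mem measurableSet_Ioo] with x hx
    have : (0:ℝ) < x := hx.1
    positivity

lemma ind_measurable (hnonneg : μ (Set.Iio 0) = 0) :
    Measurable (fun p : ℝ × ℝ => if p.2 < qf μ p.1 then (1:ℝ≥0∞) else 0) := by
  have hA : MeasurableSet {p : ℝ × ℝ | p.2 < qf μ p.1} :=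
    measurableSet_lt measurable_snd ((measurable_qf hnonneg).comp measurable_fst)
  exact Measurable.ite hA measurable_const measurable_const

lemma Tswap (hnonneg : μ (Set.Iio 0) = 0) {g : ℝ → ℝ≥0∞} (hg : Measurable g) :
    ∫⁻ u in Ioo (0:ℝ) 1, ∫⁻ x in Ioi (0:ℝ), g x * (if x < qf μ u then (1:ℝ≥0∞) else 0)
      = ∫⁻ x in Ioi (0:ℝ), g x * ENNReal.ofReal (1 - cdf μ x) := by
  have hmeas : AEMeasurable (Function.uncurry fun (u : ℝ) (x : ℝ) =>
      g x * (if x < qf μ u then (1:ℝ≥0∞) else 0))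
      ((volume.restrict (Ioo (0:ℝ) 1)).prod (volume.restrict (Ioi (0:ℝ)))) :=
    ((hg.comp measurable_snd).mul (ind_measurable hnonneg)).aemeasurable
  have hswap := MeasureTheory.lintegral_lintegral_swap hmeas
  rw [hswap]
  apply setLIntegral_congr_fun measurableSet_Ioi
  intro x hx; dsimp only
  have hmeasu : Measurable (fun u : ℝ => if x < qf μ u then (1:ℝ≥0∞) else 0) := by
    have hA : MeasurableSet {u : ℝ | x < qf μ u} :=
      measurableSet_lt measurable_const (measurable_qf hnonneg)
    exact Measurable.ite hA measurable_const measurable_const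
  rw [lintegral_const_mul _ hmeasu]
  congr 1
  have h : (fun u : ℝ => if x < qf μ u then (1:ℝ≥0∞) else 0)
      = ({u : ℝ | x < qf μ u}).indicator (fun _ => 1) := by
    funext u; simp [Set.indicator_apply]
  have hA : MeasurableSet {u : ℝ | x < qf μ u} :=
    measurableSet_lt measurable_const (measurable_qf hnonneg)
  rw [h, lintegral_indicator hA, Measure.restrict_restrict hA, setLIntegral_one,
    setOf_inter_Ioo hnonneg, Real.volume_Ioo]

lemma m_nonneg_aux (x : ℝ) : (0:ℝ) ≤ 1 - cdf μ x := by
  linarith [cdf_le_one μ x]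

lemma T1 (hnonneg : μ (Set.Iio 0) = 0)
    (hmean : IntegrableOn (fun x => 1 - cdf μ x) (Set.Ioi 0) volume) :
    ∫⁻ u in Ioo (0:ℝ) 1, ENNReal.ofReal (qf μ u)
      = ENNReal.ofReal (∫ x in Set.Ioi (0:ℝ), (1 - cdf μ x)) := by
  have h := Tswap hnonneg (g := fun _ => 1) measurable_const
  simp only [one_mul] at h
  have hL : ∫⁻ u in Ioo (0:ℝ) 1, ∫⁻ x in Ioi (0:ℝ), (if x < qf μ u then (1:ℝ≥0∞) else 0)
      = ∫⁻ u in Ioo (0:ℝ) 1, ENNReal.ofReal (qf μ u) := by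
    apply lintegral_congr
    intro u
    exact inner_ind_lintegral (qf_nonneg hnonneg u)
  rw [← hL, h, ← MeasureTheory.ofReal_integral_eq_lintegral_ofReal hmean]
  exact ae_of_all _ (fun x => m_nonneg_aux x)

lemma T2 (hnonneg : μ (Set.Iio 0) = 0)
    (hmom2 : IntegrableOn (fun x => 2 * x * (1 - cdf μ x)) (Set.Ioi 0) volume) :
    ∫⁻ u in Ioo (0:ℝ) 1, ENNReal.ofReal ((qf μ u) ^ 2)
      = ENNReal.ofReal (∫ x in Set.Ioi (0:ℝ), 2 * x * (1 - cdf μ x)) := by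
  have hg : Measurable (fun x : ℝ => ENNReal.ofReal (2 * x)) :=
    (measurable_const.mul measurable_id).ennreal_ofReal
  have h := Tswap hnonneg (g := fun x => ENNReal.ofReal (2 * x)) hg
  have hL : ∫⁻ u in Ioo (0:ℝ) 1, ∫⁻ x in Ioi (0:ℝ),
      ENNReal.ofReal (2 * x) * (if x < qf μ u then (1:ℝ≥0∞) else 0)
      = ∫⁻ u in Ioo (0:ℝ) 1, ENNReal.ofReal ((qf μ u) ^ 2) := by
    apply lintegral_congr
    intro u
    exact inner_2x_lintegral (qf_nonneg hnonneg u)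
  have hR : ∫⁻ x in Ioi (0:ℝ), ENNReal.ofReal (2 * x) * ENNReal.ofReal (1 - cdf μ x)
      = ∫⁻ x in Ioi (0:ℝ), ENNReal.ofReal (2 * x * (1 - cdf μ x)) := by
    apply setLIntegral_congr_fun measurableSet_Ioi
    intro x hx; dsimp only
    have hx0 : (0:ℝ) < x := hx
    rw [← ENNReal.ofReal_mul (by positivity : (0:ℝ) ≤ 2 * x)]
  rw [← hL, h, hR, ← MeasureTheory.ofReal_integral_eq_lintegral_ofReal hmom2]
  filter_upwards [ae_restrict_mem measurableSet_Ioi] with x hx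
  have hx0 : (0:ℝ) < x := hx
  have := m_nonneg_aux (μ := μ) x
  positivity




variable {μ : Measure ℝ} [IsProbabilityMeasure μ]



lemma m0_nonneg : (0:ℝ) ≤ ∫ x in Set.Ioi (0:ℝ), (1 - cdf μ x) :=
  setIntegral_nonneg measurableSet_Ioi (fun x _ => m_nonneg_aux x)

lemma M2_nonneg : (0:ℝ) ≤ ∫ x in Set.Ioi (0:ℝ), 2 * x * (1 - cdf μ x) := by
  apply setIntegral_nonneg measurableSet_Ioi
  intro x hx
  have hx0 : (0:ℝ) < x := hx
  have := m_nonneg_aux (μ := μ) x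
  positivity

lemma integrable_qf (hnonneg : μ (Set.Iio 0) = 0)
    (hmean : IntegrableOn (fun x => 1 - cdf μ x) (Set.Ioi 0) volume) :
    IntegrableOn (qf μ) (Ioo (0:ℝ) 1) := by
  refine ⟨(measurable_qf hnonneg).aestronglyMeasurable.restrict, ?_⟩
  rw [HasFiniteIntegral]
  have h : ∀ u : ℝ, (‖qf μ u‖₊ : ℝ≥0∞) = ENNReal.ofReal (qf μ u) := fun u =>
    Real.enorm_eq_ofReal (qf_nonneg hnonneg u)
  calc ∫⁻ u in Ioo (0:ℝ) 1, (‖qf μ u‖₊ : ℝ≥0∞)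
      = ∫⁻ u in Ioo (0:ℝ) 1, ENNReal.ofReal (qf μ u) := lintegral_congr (fun u => h u)
    _ = ENNReal.ofReal (∫ x in Set.Ioi (0:ℝ), (1 - cdf μ x)) := T1 hnonneg hmean
    _ < ⊤ := ENNReal.ofReal_lt_top

lemma int_qf (hnonneg : μ (Set.Iio 0) = 0)
    (hmean : IntegrableOn (fun x => 1 - cdf μ x) (Set.Ioi 0) volume) :
    ∫ u in Ioo (0:ℝ) 1, qf μ u = ∫ x in Set.Ioi (0:ℝ), (1 - cdf μ x) := by
  rw [integral_eq_lintegral_of_nonneg_ae (ae_of_all _ (fun u => qf_nonneg hnonneg u))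
    (measurable_qf hnonneg).aestronglyMeasurable.restrict]
  rw [T1 hnonneg hmean, ENNReal.toReal_ofReal m0_nonneg]

lemma integrable_qfsq (hnonneg : μ (Set.Iio 0) = 0)
    (hmom2 : IntegrableOn (fun x => 2 * x * (1 - cdf μ x)) (Set.Ioi 0) volume) :
    IntegrableOn (fun u => (qf μ u)^2) (Ioo (0:ℝ) 1) := by
  refine ⟨((measurable_qf hnonneg).pow_const 2).aestronglyMeasurable.restrict, ?_⟩
  rw [HasFiniteIntegral]
  have h : ∀ u : ℝ, (‖(qf μ u)^2‖₊ : ℝ≥0∞) = ENNReal.ofReal ((qf μ u)^2) := fun u =>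
    Real.enorm_eq_ofReal (sq_nonneg _)
  calc ∫⁻ u in Ioo (0:ℝ) 1, (‖(qf μ u)^2‖₊ : ℝ≥0∞)
      = ∫⁻ u in Ioo (0:ℝ) 1, ENNReal.ofReal ((qf μ u)^2) := lintegral_congr (fun u => h u)
    _ = ENNReal.ofReal (∫ x in Set.Ioi (0:ℝ), 2 * x * (1 - cdf μ x)) := T2 hnonneg hmom2
    _ < ⊤ := ENNReal.ofReal_lt_top

lemma int_qfsq (hnonneg : μ (Set.Iio 0) = 0)
    (hmom2 : IntegrableOn (fun x => 2 * x * (1 - cdf μ x)) (Set.Ioi 0) volume) :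
    ∫ u in Ioo (0:ℝ) 1, (qf μ u)^2 = ∫ x in Set.Ioi (0:ℝ), 2 * x * (1 - cdf μ x) := by
  rw [integral_eq_lintegral_of_nonneg_ae (ae_of_all _ (fun u => sq_nonneg (qf μ u)))
    ((measurable_qf hnonneg).pow_const 2).aestronglyMeasurable.restrict]
  rw [T2 hnonneg hmom2, ENNReal.toReal_ofReal M2_nonneg]

lemma integrable_mul_of_sq {ν : Measure ℝ} [IsFiniteMeasure ν] {f g : ℝ → ℝ}
    (hf : AEStronglyMeasurable f ν) (hg : AEStronglyMeasurable g ν)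
    (hf2 : Integrable (fun u => (f u)^2) ν) (hg2 : Integrable (fun u => (g u)^2) ν) :
    Integrable (fun u => f u * g u) ν := by
  refine Integrable.mono ((hf2.add hg2).const_mul (1/2)) (hf.mul hg) ?_
  apply ae_of_all
  intro u
  rw [Real.norm_eq_abs, Real.norm_eq_abs, abs_mul]
  have h1 : |f u * g u| = |f u| * |g u| := abs_mul _ _
  have h2 : (1/2 : ℝ) * ((f u)^2 + (g u)^2) ≤ |1/2 * ((f u)^2 + (g u)^2)| := le_abs_self _
  have h3 : |f u| * |g u| ≤ (1/2 : ℝ) * ((f u)^2 + (g u)^2) := by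
    nlinarith [sq_nonneg (|f u| - |g u|), sq_abs (f u), sq_abs (g u)]
  calc |f u| * |g u| ≤ (1/2 : ℝ) * ((f u)^2 + (g u)^2) := h3
    _ ≤ |1/2 * ((f u)^2 + (g u)^2)| := h2

instance : IsFiniteMeasure (volume.restrict (Ioo (0:ℝ) 1)) := by
  constructor
  rw [Measure.restrict_apply MeasurableSet.univ, Set.univ_inter, Real.volume_Ioo]
  exact ENNReal.ofReal_lt_top

lemma integrable_one_Ioo : IntegrableOn (fun _ : ℝ => (1:ℝ)) (Ioo (0:ℝ) 1) :=
  integrable_const 1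

lemma integrable_lf_mul_qf (hnonneg : μ (Set.Iio 0) = 0)
    (hmom2 : IntegrableOn (fun x => 2 * x * (1 - cdf μ x)) (Set.Ioi 0) volume) :
    IntegrableOn (fun u => lf u * qf μ u) (Ioo (0:ℝ) 1) :=
  integrable_mul_of_sq measurable_lf.aestronglyMeasurable.restrict
    (measurable_qf hnonneg).aestronglyMeasurable.restrict integrableOn_lfsq
    (integrable_qfsq hnonneg hmom2)

lemma integrable_abslf_mul_qf (hnonneg : μ (Set.Iio 0) = 0)
    (hmom2 : IntegrableOn (fun x => 2 * x * (1 - cdf μ x)) (Set.Ioi 0) volume) :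
    IntegrableOn (fun u => |lf u| * qf μ u) (Ioo (0:ℝ) 1) := by
  refine integrable_mul_of_sq ?_ (measurable_qf hnonneg).aestronglyMeasurable.restrict ?_
    (integrable_qfsq hnonneg hmom2)
  · exact measurable_lf.abs.aestronglyMeasurable.restrict
  · have : (fun u => |lf u|^2) = (fun u => (lf u)^2) := by funext u; rw [sq_abs]
    rw [this]
    exact integrableOn_lfsq

lemma integrable_lf01 : IntegrableOn lf (Ioo (0:ℝ) 1) := by
  have h := integrable_mul_of_sq (ν := volume.restrict (Ioo (0:ℝ) 1)) (g := fun _ => (1:ℝ))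
    measurable_lf.aestronglyMeasurable.restrict aestronglyMeasurable_const
    integrableOn_lfsq (by simpa using integrable_one_Ioo)
  simp only [mul_one] at h; exact h

-- the indicator integral over ρ
lemma real_inner_ind {q : ℝ} (hq : 0 ≤ q) :
    ∫ x in Ioi (0:ℝ), (if x < q then (1:ℝ) else 0) = q := by
  have h : (fun x : ℝ => if x < q then (1:ℝ) else 0)
      = (Iio q).indicator (fun _ => 1) := by
    funext x; simp [Set.indicator_apply, mem_Iio]
  rw [h, MeasureTheory.integral_indicator measurableSet_Iio, Measure.restrict_restrict measurableSet_Iio,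
    Iio_inter_Ioi, setIntegral_const, Real.volume_real_Ioo_of_le hq, sub_zero, smul_eq_mul,
    mul_one]

noncomputable def FF (μ : Measure ℝ) : ℝ × ℝ → ℝ :=
  fun p => lf p.1 * (if p.2 < qf μ p.1 then (1:ℝ) else 0)

lemma FF_meas (hnonneg : μ (Set.Iio 0) = 0) : Measurable (FF μ) := by
  have hA : MeasurableSet {p : ℝ × ℝ | p.2 < qf μ p.1} :=
    measurableSet_lt measurable_snd ((measurable_qf hnonneg).comp measurable_fst)
  exact (measurable_lf.comp measurable_fst).mul (Measurable.ite hA measurable_const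
    measurable_const)

lemma FF_integrable (hnonneg : μ (Set.Iio 0) = 0)
    (hmom2 : IntegrableOn (fun x => 2 * x * (1 - cdf μ x)) (Set.Ioi 0) volume) :
    Integrable (FF μ) ((volume.restrict (Ioo (0:ℝ) 1)).prod (volume.restrict (Ioi (0:ℝ)))) := by
  rw [integrable_prod_iff ((FF_meas hnonneg).aestronglyMeasurable)]
  constructor
  · apply ae_of_all
    intro u
    have h : (fun x => FF μ (u, x)) = (Iio (qf μ u)).indicator (fun _ => lf u) := by
      funext x; simp [FF, Set.indicator_apply, mem_Iio, mul_ite]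
    rw [h, integrable_indicator_iff measurableSet_Iio]
    apply (integrableOn_const_iff (C := lf u)).mpr
    right
    rw [Measure.restrict_apply measurableSet_Iio, Iio_inter_Ioi, Real.volume_Ioo]
    exact ENNReal.ofReal_lt_top
  · have h : ∀ u : ℝ, (∫ x in Ioi (0:ℝ), ‖FF μ (u, x)‖) = |lf u| * qf μ u := by
      intro u
      have h1 : (fun x => ‖FF μ (u, x)‖) = (fun x => |lf u| * (if x < qf μ u then (1:ℝ) else 0))
          := by
        funext x
        simp only [FF, Real.norm_eq_abs, abs_mul]
        congr 1
        split_ifs <;> simp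
      rw [h1, MeasureTheory.integral_const_mul, real_inner_ind (qf_nonneg hnonneg u)]
    have heq : (fun u => ∫ x in Ioi (0:ℝ), ‖FF μ (u, x)‖)
        = (fun u => |lf u| * qf μ u) := funext h
    rw [heq]
    exact integrable_abslf_mul_qf hnonneg hmom2

lemma key_swap (hnonneg : μ (Set.Iio 0) = 0)
    (hmom2 : IntegrableOn (fun x => 2 * x * (1 - cdf μ x)) (Set.Ioi 0) volume) :
    ∫ u in Ioo (0:ℝ) 1, lf u * qf μ u
      = ∫ x in Ioi (0:ℝ), (-(cdf μ x * Real.log (cdf μ x))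
          - (1 - cdf μ x) * Real.log (1 - cdf μ x)) := by
  have hF := FF_integrable hnonneg hmom2
  have hswap := MeasureTheory.integral_integral_swap (f := fun u x => FF μ (u, x))
    (by exact hF)
  have hL : ∫ u in Ioo (0:ℝ) 1, (∫ x in Ioi (0:ℝ), FF μ (u, x))
      = ∫ u in Ioo (0:ℝ) 1, lf u * qf μ u := by
    apply MeasureTheory.integral_congr_ae
    apply ae_of_all
    intro u
    show (∫ x in Ioi (0:ℝ), FF μ (u, x)) = lf u * qf μ u
    have h1 : (fun x => FF μ (u, x)) = (fun x => lf u * (if x < qf μ u then (1:ℝ) else 0)) := by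
      funext x; simp [FF]
    rw [h1, MeasureTheory.integral_const_mul, real_inner_ind (qf_nonneg hnonneg u)]
  have hR : ∫ x in Ioi (0:ℝ), (∫ u in Ioo (0:ℝ) 1, FF μ (u, x))
      = ∫ x in Ioi (0:ℝ), (-(cdf μ x * Real.log (cdf μ x))
          - (1 - cdf μ x) * Real.log (1 - cdf μ x)) := by
    apply MeasureTheory.integral_congr_ae
    apply ae_of_all
    intro x
    show (∫ u in Ioo (0:ℝ) 1, FF μ (u, x)) = -(cdf μ x * Real.log (cdf μ x))
      - (1 - cdf μ x) * Real.log (1 - cdf μ x)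
    have h1 : (fun u => FF μ (u, x)) =ᵐ[volume.restrict (Ioo (0:ℝ) 1)]
        (Ioi (cdf μ x)).indicator lf := by
      filter_upwards [ae_restrict_mem measurableSet_Ioo] with u hu
      simp only [FF, Set.indicator_apply, mem_Ioi]
      simp only [lt_qf_iff hnonneg hu x]
      split_ifs <;> simp
    rw [MeasureTheory.integral_congr_ae h1, MeasureTheory.integral_indicator measurableSet_Ioi,
      Measure.restrict_restrict measurableSet_Ioi, Ioi_inter_Ioo (cdf_nonneg μ x),
      Hpt (cdf_nonneg μ x) (cdf_le_one μ x)]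
  rw [← hL, hswap, hR]

lemma integrable_H (hnonneg : μ (Set.Iio 0) = 0)
    (hmom2 : IntegrableOn (fun x => 2 * x * (1 - cdf μ x)) (Set.Ioi 0) volume) :
    IntegrableOn (fun x => -(cdf μ x * Real.log (cdf μ x))
      - (1 - cdf μ x) * Real.log (1 - cdf μ x)) (Ioi (0:ℝ)) := by
  have hF := FF_integrable hnonneg hmom2
  have h := hF.integral_prod_right
  apply h.congr
  apply ae_of_all
  intro x
  show (∫ u in Ioo (0:ℝ) 1, FF μ (u, x)) = -(cdf μ x * Real.log (cdf μ x))
    - (1 - cdf μ x) * Real.log (1 - cdf μ x)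
  have h1 : (fun u => FF μ (u, x)) =ᵐ[volume.restrict (Ioo (0:ℝ) 1)]
      (Ioi (cdf μ x)).indicator lf := by
    filter_upwards [ae_restrict_mem measurableSet_Ioo] with u hu
    simp only [FF, Set.indicator_apply, mem_Ioi]
    simp only [lt_qf_iff hnonneg hu x]
    split_ifs <;> simp
  rw [MeasureTheory.integral_congr_ae h1, MeasureTheory.integral_indicator measurableSet_Ioi,
    Measure.restrict_restrict measurableSet_Ioi, Ioi_inter_Ioo (cdf_nonneg μ x),
    Hpt (cdf_nonneg μ x) (cdf_le_one μ x)]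




variable {μ : Measure ℝ} [IsProbabilityMeasure μ]



lemma measurable_cdf' : Measurable (fun x => cdf μ x) := (monotone_cdf μ).measurable

lemma H_term1_nonneg (x : ℝ) : 0 ≤ -(cdf μ x * Real.log (cdf μ x)) := by
  have h1 := cdf_nonneg μ x
  have h2 := cdf_le_one μ x
  have h3 : Real.log (cdf μ x) ≤ 0 := Real.log_nonpos h1 h2
  nlinarith

lemma H_term2_nonneg (x : ℝ) : 0 ≤ -((1 - cdf μ x) * Real.log (1 - cdf μ x)) := by
  have h1 := cdf_nonneg μ x
  have h2 := cdf_le_one μ x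
  have h3 : Real.log (1 - cdf μ x) ≤ 0 := Real.log_nonpos (by linarith) (by linarith)
  nlinarith

lemma integrable_g1 (hnonneg : μ (Set.Iio 0) = 0)
    (hmom2 : IntegrableOn (fun x => 2 * x * (1 - cdf μ x)) (Set.Ioi 0) volume) :
    IntegrableOn (fun x => (1 - cdf μ x) * Real.log (1 - cdf μ x)) (Ioi (0:ℝ)) := by
  refine Integrable.mono (integrable_H hnonneg hmom2) ?_ ?_
  · exact ((measurable_const.sub measurable_cdf').mul
      ((measurable_const.sub measurable_cdf').log)).aestronglyMeasurable.restrict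
  · apply ae_of_all
    intro x
    rw [Real.norm_eq_abs, Real.norm_eq_abs]
    have h1 := H_term1_nonneg (μ := μ) x
    have h2 := H_term2_nonneg (μ := μ) x
    rw [abs_of_nonpos (by linarith), abs_of_nonneg (by linarith)]
    linarith

lemma integrable_g2 (hnonneg : μ (Set.Iio 0) = 0)
    (hmom2 : IntegrableOn (fun x => 2 * x * (1 - cdf μ x)) (Set.Ioi 0) volume) :
    IntegrableOn (fun x => cdf μ x * Real.log (cdf μ x)) (Ioi (0:ℝ)) := by
  refine Integrable.mono (integrable_H hnonneg hmom2) ?_ ?_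
  · exact (measurable_cdf'.mul measurable_cdf'.log).aestronglyMeasurable.restrict
  · apply ae_of_all
    intro x
    rw [Real.norm_eq_abs, Real.norm_eq_abs]
    have h1 := H_term1_nonneg (μ := μ) x
    have h2 := H_term2_nonneg (μ := μ) x
    rw [abs_of_nonpos (by linarith), abs_of_nonneg (by linarith)]
    linarith

lemma sqrt_le_of_sq {x b : ℝ} (hx : 0 ≤ x) (hb : 0 < b) (h : x ≤ b^2) : Real.sqrt x ≤ b := by
  nlinarith [Real.sq_sqrt hx, Real.sqrt_nonneg x, sq_nonneg (Real.sqrt x - b)]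

lemma summable_term : Summable (fun n : ℕ => 1 / (((n:ℝ) + 1) * Real.sqrt ((n:ℝ) + 2))) := by
  have h0 : Summable (fun n : ℕ => 1 / ((n:ℝ) ^ ((3:ℝ)/2))) :=
    Real.summable_one_div_nat_rpow.mpr (by norm_num)
  have h1 : Summable (fun n : ℕ => 1 / (((n:ℝ) + 1) ^ ((3:ℝ)/2))) := by
    have h2 := (summable_nat_add_iff 1).mpr h0
    apply h2.congr
    intro n
    push_cast
    norm_num
  apply Summable.of_nonneg_of_le (fun n => by positivity) (fun n => ?_) h1
  have hpos : (0:ℝ) < (n:ℝ) + 1 := by positivity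
  have hrw : ((n:ℝ) + 1) ^ ((3:ℝ)/2) = ((n:ℝ) + 1) * Real.sqrt ((n:ℝ) + 1) := by
    rw [show ((3:ℝ)/2) = 1 + 1/2 by norm_num, Real.rpow_add hpos, Real.rpow_one,
      Real.sqrt_eq_rpow]
  rw [hrw]
  apply one_div_le_one_div_of_le
  · positivity
  · apply mul_le_mul_of_nonneg_left _ hpos.le
    exact Real.sqrt_le_sqrt (by linarith)

lemma tsum_ge_sqrt2 : Real.sqrt 2 ≤ ∑' n : ℕ, 1 / (((n:ℝ) + 1) * Real.sqrt ((n:ℝ) + 2)) := by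
  have hpart := Summable.sum_le_tsum (Finset.range 7) (fun i _ => by positivity) summable_term
  refine le_trans ?_ hpart
  have e2 : Real.sqrt 2 ≤ 1.41422 := sqrt_le_of_sq (by norm_num) (by norm_num) (by norm_num)
  have e3 : Real.sqrt 3 ≤ 1.73206 := sqrt_le_of_sq (by norm_num) (by norm_num) (by norm_num)
  have e4 : Real.sqrt 4 ≤ 2 := sqrt_le_of_sq (by norm_num) (by norm_num) (by norm_num)
  have e5 : Real.sqrt 5 ≤ 2.23607 := sqrt_le_of_sq (by norm_num) (by norm_num) (by norm_num)
  have e6 : Real.sqrt 6 ≤ 2.44949 := sqrt_le_of_sq (by norm_num) (by norm_num) (by norm_num)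
  have e7 : Real.sqrt 7 ≤ 2.64576 := sqrt_le_of_sq (by norm_num) (by norm_num) (by norm_num)
  have e8 : Real.sqrt 8 ≤ 2.82843 := sqrt_le_of_sq (by norm_num) (by norm_num) (by norm_num)
  have p2 : (0:ℝ) < Real.sqrt 2 := Real.sqrt_pos.mpr (by norm_num)
  have p3 : (0:ℝ) < Real.sqrt 3 := Real.sqrt_pos.mpr (by norm_num)
  have p4 : (0:ℝ) < Real.sqrt 4 := Real.sqrt_pos.mpr (by norm_num)
  have p5 : (0:ℝ) < Real.sqrt 5 := Real.sqrt_pos.mpr (by norm_num)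
  have p6 : (0:ℝ) < Real.sqrt 6 := Real.sqrt_pos.mpr (by norm_num)
  have p7 : (0:ℝ) < Real.sqrt 7 := Real.sqrt_pos.mpr (by norm_num)
  have p8 : (0:ℝ) < Real.sqrt 8 := Real.sqrt_pos.mpr (by norm_num)
  have q0 : (1:ℝ)/(1 * 1.41422) ≤ 1/(1 * Real.sqrt 2) :=
    one_div_le_one_div_of_le (by positivity) (by nlinarith)
  have q1 : (1:ℝ)/(2 * 1.73206) ≤ 1/(2 * Real.sqrt 3) :=
    one_div_le_one_div_of_le (by positivity) (by nlinarith)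
  have q2 : (1:ℝ)/(3 * 2) ≤ 1/(3 * Real.sqrt 4) :=
    one_div_le_one_div_of_le (by positivity) (by nlinarith)
  have q3 : (1:ℝ)/(4 * 2.23607) ≤ 1/(4 * Real.sqrt 5) :=
    one_div_le_one_div_of_le (by positivity) (by nlinarith)
  have q4 : (1:ℝ)/(5 * 2.44949) ≤ 1/(5 * Real.sqrt 6) :=
    one_div_le_one_div_of_le (by positivity) (by nlinarith)
  have q5 : (1:ℝ)/(6 * 2.64576) ≤ 1/(6 * Real.sqrt 7) :=
    one_div_le_one_div_of_le (by positivity) (by nlinarith)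
  have q6 : (1:ℝ)/(7 * 2.82843) ≤ 1/(7 * Real.sqrt 8) :=
    one_div_le_one_div_of_le (by positivity) (by nlinarith)
  have hexp : ∑ n ∈ Finset.range 7, 1 / (((n:ℝ) + 1) * Real.sqrt ((n:ℝ) + 2))
      = 1/(1 * Real.sqrt 2) + 1/(2 * Real.sqrt 3) + 1/(3 * Real.sqrt 4) + 1/(4 * Real.sqrt 5)
        + 1/(5 * Real.sqrt 6) + 1/(6 * Real.sqrt 7) + 1/(7 * Real.sqrt 8) := by
    simp [Finset.sum_range_succ]
    norm_num
  rw [hexp]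
  have hnum : (1.41422:ℝ) ≤ 1/(1 * 1.41422) + 1/(2 * 1.73206) + 1/(3 * 2) + 1/(4 * 2.23607)
      + 1/(5 * 2.44949) + 1/(6 * 2.64576) + 1/(7 * 2.82843) := by norm_num
  linarith




variable {μ : Measure ℝ} [IsProbabilityMeasure μ]



theorem main
    (hnonneg : μ (Set.Iio 0) = 0)
    (hmean : IntegrableOn (fun x => 1 - cdf μ x) (Set.Ioi 0) volume)
    (hmom2 : IntegrableOn (fun x => 2 * x * (1 - cdf μ x)) (Set.Ioi 0) volume)
    (m σ : ℝ) (hm : m = ∫ x in Set.Ioi (0 : ℝ), (1 - cdf μ x))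
    (hσ : σ = Real.sqrt ((∫ x in Set.Ioi (0 : ℝ), 2 * x * (1 - cdf μ x)) - m ^ 2)) :
    (-∫ x in Set.Ioi (0 : ℝ), (1 - cdf μ x) * Real.log (1 - cdf μ x))
        + (-∫ x in Set.Ioi (0 : ℝ), cdf μ x * Real.log (cdf μ x))
      ≤ Real.sqrt 2 * σ
          * ∑' n : ℕ, 1 / (((n : ℝ) + 1) * Real.sqrt ((n : ℝ) + 2)) := by
  set ν := volume.restrict (Ioo (0:ℝ) 1) with hν
  set M2 : ℝ := ∫ x in Set.Ioi (0 : ℝ), 2 * x * (1 - cdf μ x) with hM2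
  -- step 1: LHS = ∫ H = b
  have hsum : (-∫ x in Set.Ioi (0 : ℝ), (1 - cdf μ x) * Real.log (1 - cdf μ x))
      + (-∫ x in Set.Ioi (0 : ℝ), cdf μ x * Real.log (cdf μ x))
      = ∫ x in Ioi (0:ℝ), (-(cdf μ x * Real.log (cdf μ x))
        - (1 - cdf μ x) * Real.log (1 - cdf μ x)) := by
    have hIg1 := integrable_g1 hnonneg hmom2
    have hIg2 := integrable_g2 hnonneg hmom2
    have hIg2n : IntegrableOn (fun x => -(cdf μ x * Real.log (cdf μ x))) (Ioi (0:ℝ)) := hIg2.neg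
    rw [integral_sub hIg2n hIg1]
    have h2 : ∫ x in Ioi (0:ℝ), -(cdf μ x * Real.log (cdf μ x))
        = -∫ x in Ioi (0:ℝ), cdf μ x * Real.log (cdf μ x) := integral_neg _
    rw [h2]
    ring
  rw [hsum, ← key_swap hnonneg hmom2]
  -- notation
  set b : ℝ := ∫ u in Ioo (0:ℝ) 1, lf u * qf μ u with hb
  set c2 : ℝ := ∫ u in Ioo (0:ℝ) 1, (lf u)^2 with hc2
  set a2 : ℝ := ∫ u in Ioo (0:ℝ) 1, (qf μ u - m)^2 with ha2
  have hqf := integrable_qf hnonneg hmean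
  have hqfsq := integrable_qfsq hnonneg hmom2
  have hlfqf := integrable_lf_mul_qf hnonneg hmom2
  have hμν1 : (ν univ).toReal = 1 := by
    rw [hν, Measure.restrict_apply MeasurableSet.univ, Set.univ_inter, Real.volume_Ioo]
    norm_num
  -- a2 = M2 - m^2
  have hXsq_expand : ∀ u : ℝ, (qf μ u - m)^2 = (qf μ u)^2 - 2*m*(qf μ u) + m^2 := by
    intro u; ring
  have hint_a2 : a2 = M2 - m^2 := by
    rw [ha2]
    have : (fun u => (qf μ u - m)^2)
        = (fun u => ((qf μ u)^2 - 2*m*(qf μ u)) + m^2) := by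
      funext u; ring
    rw [this]
    have hI1 : IntegrableOn (fun u => (qf μ u)^2 - 2*m*(qf μ u)) (Ioo (0:ℝ) 1) :=
      hqfsq.sub (hqf.const_mul (2*m))
    rw [integral_add hI1 (integrable_const _)]
    rw [integral_sub hqfsq (hqf.const_mul (2*m))]
    rw [MeasureTheory.integral_const_mul]
    rw [int_qfsq hnonneg hmom2, int_qf hnonneg hmean, ← hm, ← hM2]
    rw [MeasureTheory.integral_const, measureReal_def, hμν1]
    simp only [smul_eq_mul]
    ring
  have ha2_nonneg : 0 ≤ a2 := by
    rw [ha2]; exact integral_nonneg (fun u => sq_nonneg _)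
  have hc2_nonneg : 0 ≤ c2 := by
    rw [hc2]; exact integral_nonneg (fun u => sq_nonneg _)
  have hc2_le : c2 ≤ 4 := int_lfsq_le
  -- b = ∫ (qf - m) * lf
  have hXlf_int : IntegrableOn (fun u => (qf μ u - m) * lf u) (Ioo (0:ℝ) 1) := by
    have : (fun u => (qf μ u - m) * lf u) = (fun u => lf u * qf μ u - m * lf u) := by
      funext u; ring
    rw [this]
    exact hlfqf.sub (integrable_lf01.const_mul m)
  have hb_eq : b = ∫ u in Ioo (0:ℝ) 1, (qf μ u - m) * lf u := by
    have h1 : (fun u => (qf μ u - m) * lf u) = (fun u => lf u * qf μ u - m * lf u) := by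
      funext u; ring
    rw [h1, integral_sub hlfqf (integrable_lf01.const_mul m), MeasureTheory.integral_const_mul,
      int_lf, mul_zero, sub_zero, hb]
  -- Cauchy-Schwarz : b^2 ≤ a2 * c2
  have hXsq_int : IntegrableOn (fun u => (qf μ u - m)^2) (Ioo (0:ℝ) 1) := by
    have : (fun u => (qf μ u - m)^2)
        = (fun u => ((qf μ u)^2 - (2*m)*(qf μ u)) + m^2) := by
      funext u; ring
    rw [this]
    have hI1 : IntegrableOn (fun u => (qf μ u)^2 - (2*m)*(qf μ u)) (Ioo (0:ℝ) 1) :=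
      hqfsq.sub (hqf.const_mul (2*m))
    exact hI1.add (integrable_const _)
  have hCS : b^2 ≤ a2 * c2 := by
    rcases eq_or_lt_of_le hc2_nonneg with hc0 | hc0
    · -- c2 = 0 : lf = 0 a.e.
      have hlf0 : (fun u => (lf u)^2) =ᵐ[ν] 0 := by
        have := (integral_eq_zero_iff_of_nonneg_ae (ae_of_all _ (fun u => sq_nonneg (lf u)))
          integrableOn_lfsq).mp hc0.symm
        exact this
      have hlf0' : lf =ᵐ[ν] 0 := by
        filter_upwards [hlf0] with u hu
        have : (lf u)^2 = 0 := hu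
        exact pow_eq_zero_iff (n := 2) (by norm_num) |>.mp this
      have hprod0 : (fun u => (qf μ u - m) * lf u) =ᵐ[ν] 0 := by
        filter_upwards [hlf0'] with u hu
        simp [hu]
      have hb0 : b = 0 := by
        rw [hb_eq, MeasureTheory.integral_congr_ae hprod0]
        simp
      rw [hb0, ← hc0]
      simp
    · -- c2 > 0
      have hE : 0 ≤ ∫ u in Ioo (0:ℝ) 1, (c2 * (qf μ u - m) - b * lf u)^2 :=
        integral_nonneg (fun u => sq_nonneg _)
      have hexp : ∫ u in Ioo (0:ℝ) 1, (c2 * (qf μ u - m) - b * lf u)^2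
          = c2^2 * a2 - 2*c2*b*b + b^2 * c2 := by
        have h1 : (fun u => (c2 * (qf μ u - m) - b * lf u)^2)
            = (fun u => (c2^2 * (qf μ u - m)^2 - (2*c2*b) * ((qf μ u - m) * lf u))
              + b^2 * (lf u)^2) := by
          funext u; ring
        rw [h1]
        have hI1 : IntegrableOn (fun u => c2^2 * (qf μ u - m)^2
            - (2*c2*b) * ((qf μ u - m) * lf u)) (Ioo (0:ℝ) 1) :=
          (hXsq_int.const_mul (c2^2)).sub (hXlf_int.const_mul (2*c2*b))
        have hI2 : IntegrableOn (fun u => b^2 * (lf u)^2) (Ioo (0:ℝ) 1) :=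
          integrableOn_lfsq.const_mul (b^2)
        rw [integral_add hI1 hI2]
        rw [integral_sub (hXsq_int.const_mul (c2^2)) (hXlf_int.const_mul (2*c2*b))]
        rw [MeasureTheory.integral_const_mul, MeasureTheory.integral_const_mul,
          MeasureTheory.integral_const_mul]
        rw [← ha2, ← hc2, ← hb_eq]
      rw [hexp] at hE
      nlinarith
  -- b ≤ 2 * sqrt a2
  have hσa : σ = Real.sqrt a2 := by rw [hσ, hint_a2, hM2]
  have hb_le : b ≤ 2 * σ := by
    have h1 : b ≤ |b| := le_abs_self b
    have h2 : |b| = Real.sqrt (b^2) := (Real.sqrt_sq_eq_abs b).symm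
    have h3 : Real.sqrt (b^2) ≤ Real.sqrt (a2 * c2) := Real.sqrt_le_sqrt hCS
    have h4 : Real.sqrt (a2 * c2) ≤ Real.sqrt (a2 * 4) := by
      apply Real.sqrt_le_sqrt
      nlinarith
    have h5 : Real.sqrt (a2 * 4) = Real.sqrt a2 * 2 := by
      rw [Real.sqrt_mul ha2_nonneg, show (4:ℝ) = 2^2 by norm_num, Real.sqrt_sq (by norm_num)]
    rw [hσa]
    linarith
  -- final
  have hσ_nonneg : 0 ≤ σ := by rw [hσ]; exact Real.sqrt_nonneg _
  have hT := tsum_ge_sqrt2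
  calc b ≤ 2 * σ := hb_le
    _ = Real.sqrt 2 * σ * Real.sqrt 2 := by
        rw [show Real.sqrt 2 * σ * Real.sqrt 2 = (Real.sqrt 2 * Real.sqrt 2) * σ by ring,
          Real.mul_self_sqrt (by norm_num)]
    _ ≤ Real.sqrt 2 * σ * ∑' n : ℕ, 1 / (((n : ℝ) + 1) * Real.sqrt ((n : ℝ) + 2)) := by
        apply mul_le_mul_of_nonneg_left hT
        positivity



end CRE12


/-- For a nonnegative random variable with cdf `F = cdf μ`, finite mean
`m = ∫₀^∞ (1 - F x) dx` and finite variance `σ² = ∫₀^∞ 2x (1 - F x) dx - m²`, the sum of the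
cumulative residual entropy and the cumulative entropy satisfies
`𝓔(X) + 𝓒𝓔(X) ≤ √2 σ ∑_{n=1}^∞ 1/(n √(n+1))` (a bound approximately equal to `3.09 σ`). -/
theorem cre_add_ce_le_sigma_tsum
    (μ : Measure ℝ) [IsProbabilityMeasure μ] (hnonneg : μ (Set.Iio 0) = 0)
    (hmean : IntegrableOn (fun x => 1 - cdf μ x) (Set.Ioi 0) volume)
    (hmom2 : IntegrableOn (fun x => 2 * x * (1 - cdf μ x)) (Set.Ioi 0) volume)
    (m σ : ℝ) (hm : m = ∫ x in Set.Ioi (0 : ℝ), (1 - cdf μ x))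
    (hσ : σ = Real.sqrt ((∫ x in Set.Ioi (0 : ℝ), 2 * x * (1 - cdf μ x)) - m ^ 2)) :
    (-∫ x in Set.Ioi (0 : ℝ), (1 - cdf μ x) * Real.log (1 - cdf μ x))
        + (-∫ x in Set.Ioi (0 : ℝ), cdf μ x * Real.log (cdf μ x))
      ≤ Real.sqrt 2 * σ
          * ∑' n : ℕ, 1 / (((n : ℝ) + 1) * Real.sqrt ((n : ℝ) + 2)) := by
  exact CRE12.main hnonneg hmean hmom2 m σ hm hσ
end

section
/- Let X be a nonnegative random variable with continuous cumulative distribution function F and finite mean μ = ∫₀^∞ (1 − F(x)) dx, and suppose X is symmetric about μ, i.e. F(μ + x) + F(μ − x) = 1 for all x ∈ ℝ. Then for every n ≥ 1 the means of the extreme order statistics satisfy μ_{n:n} − μ = μ − μ_{1:n}, and consequently the cumulative entropy equals the cumulative residual entropy: 𝓒𝓔(X) = 𝓔(X). -/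
open MeasureTheory ProbabilityTheory Set Filter Topology

/-!
Symmetry about `m` reads `F (2m - x) = 1 - F x`. Since `F` vanishes on `(-∞, 0)` and is
right-continuous, this forces `F = 1` on `[2m, ∞)` and `m > 0`, so every integrand that vanishes
where `F = 1` may be integrated over `[0, 2m]` instead of `(0, ∞)`. On `[0, 2m]` the reflection
`x ↦ 2m - x` exchanges `F` and `1 - F`: it turns `μ_{1:n}` into `∫₀^{2m} Fⁿ`, whence
`μ_{n:n} + μ_{1:n} = ∫₀^{2m} 1 = 2m`, and it turns `∫ F log F` into `∫ (1 - F) log (1 - F)`.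
-/

theorem apply_two_mul_sub_of_symm {f : ℝ → ℝ} {c : ℝ} (hsym : ∀ x, f (c + x) + f (c - x) = 1)
    (x : ℝ) : f (2 * c - x) = 1 - f x := by
  have h := hsym (x - c)
  rw [add_sub_cancel, show c - (x - c) = 2 * c - x by ring] at h
  linarith

theorem setIntegral_Ioi_zero_eq_intervalIntegral {f : ℝ → ℝ} {b : ℝ} (hb : 0 ≤ b)
    (hf : ∀ x, b < x → f x = 0) : ∫ x in Ioi 0, f x = ∫ x in 0..b, f x := by
  rw [intervalIntegral.integral_of_le hb]
  exact setIntegral_eq_of_subset_of_forall_sdiff_eq_zero measurableSet_Ioi Ioc_subset_Ioi_self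
    fun x hx => hf x (not_le.1 fun h => hx.2 ⟨hx.1, h⟩)

theorem intervalIntegral_comp_one_sub_of_symm {f : ℝ → ℝ} {c : ℝ}
    (hsym : ∀ x, f (c + x) + f (c - x) = 1) (φ : ℝ → ℝ) :
    ∫ x in 0..2 * c, φ (1 - f x) = ∫ x in 0..2 * c, φ (f x) := by
  simp_rw [← apply_two_mul_sub_of_symm hsym]
  simpa using
    intervalIntegral.integral_comp_sub_left (a := 0) (b := 2 * c) (fun x => φ (f x)) (2 * c)

theorem ProbabilityTheory.cdf_eq_zero_of_measure_Iio_zero {μ : Measure ℝ}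
    [IsProbabilityMeasure μ] (hμ : μ (Iio 0) = 0) {x : ℝ} (hx : x < 0) : cdf μ x = 0 := by
  rw [cdf_eq_real, measureReal_def, measure_mono_null (Iic_subset_Iio.2 hx) hμ,
    ENNReal.toReal_zero]

namespace StieltjesFunction

variable {F : StieltjesFunction ℝ} {c : ℝ}

theorem nonneg_of_eq_zero_of_neg (h0 : ∀ x < 0, F x = 0) (x : ℝ) : 0 ≤ F x := by
  rw [← h0 (min x (-1)) (by simp)]
  exact F.mono (min_le_left _ _)

theorem eq_one_of_two_mul_le (h0 : ∀ x < 0, F x = 0) (hsym : ∀ x, F (c + x) + F (c - x) = 1)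
    {x : ℝ} (hx : 2 * c ≤ x) : F x = 1 := by
  have h_gt : ∀ y, 2 * c < y → F y = 1 := fun y hy => by
    have h := apply_two_mul_sub_of_symm hsym y
    rw [h0 _ (by linarith)] at h
    linarith
  rcases hx.lt_or_eq with hx | rfl
  · exact h_gt x hx
  · have hlim : Tendsto F (𝓝[>] (2 * c)) (𝓝 (F (2 * c))) :=
      (F.right_continuous _).mono Ioi_subset_Ici_self
    exact tendsto_nhds_unique hlim
      (tendsto_const_nhds.congr' (eventually_nhdsWithin_of_forall fun y hy => (h_gt y hy).symm))

theorem pos_of_symm (h0 : ∀ x < 0, F x = 0) (hsym : ∀ x, F (c + x) + F (c - x) = 1) :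
    0 < c := by
  have hFc : F c = 1 / 2 := by
    have h := hsym 0
    rw [add_zero, sub_zero] at h
    linarith
  have hF0 : F 0 = 0 := by
    have h := apply_two_mul_sub_of_symm hsym (2 * c)
    rwa [sub_self, eq_one_of_two_mul_le h0 hsym le_rfl, sub_self] at h
  by_contra! hc
  linarith [F.mono hc]

theorem setIntegral_Ioi_zero_comp_eq_intervalIntegral (h0 : ∀ x < 0, F x = 0)
    (hsym : ∀ x, F (c + x) + F (c - x) = 1) {φ : ℝ → ℝ} (hφ : φ 1 = 0) :
    ∫ x in Ioi 0, φ (F x) = ∫ x in 0..2 * c, φ (F x) :=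
  setIntegral_Ioi_zero_eq_intervalIntegral (by linarith [pos_of_symm h0 hsym])
    fun x hx => by rw [eq_one_of_two_mul_le h0 hsym hx.le, hφ]

theorem integral_one_sub_pow_add_integral_one_sub_pow (h0 : ∀ x < 0, F x = 0)
    (hsym : ∀ x, F (c + x) + F (c - x) = 1) {n : ℕ} (hn : n ≠ 0) :
    (∫ x in Ioi 0, (1 - F x ^ n)) + ∫ x in Ioi 0, (1 - F x) ^ n = 2 * c := by
  have hpow : Monotone fun x => F x ^ n := fun x y hxy =>
    pow_le_pow_left₀ (nonneg_of_eq_zero_of_neg h0 x) (F.mono hxy) n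
  rw [setIntegral_Ioi_zero_comp_eq_intervalIntegral h0 hsym (φ := fun t => 1 - t ^ n) (by simp),
    setIntegral_Ioi_zero_comp_eq_intervalIntegral h0 hsym (φ := fun t => (1 - t) ^ n)
      (by simp [hn]),
    intervalIntegral_comp_one_sub_of_symm hsym (· ^ n),
    ← intervalIntegral.integral_add (intervalIntegrable_const.sub hpow.intervalIntegrable)
      hpow.intervalIntegrable]
  simp

theorem integral_mul_log_eq_integral_one_sub_mul_log (h0 : ∀ x < 0, F x = 0)
    (hsym : ∀ x, F (c + x) + F (c - x) = 1) :
    ∫ x in Ioi 0, F x * Real.log (F x) = ∫ x in Ioi 0, (1 - F x) * Real.log (1 - F x) := by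
  rw [setIntegral_Ioi_zero_comp_eq_intervalIntegral h0 hsym (φ := fun t => t * Real.log t)
      (by simp),
    setIntegral_Ioi_zero_comp_eq_intervalIntegral h0 hsym
      (φ := fun t => (1 - t) * Real.log (1 - t)) (by simp),
    intervalIntegral_comp_one_sub_of_symm hsym (fun t => t * Real.log t)]

end StieltjesFunction

theorem symm_order_stats_and_ce_eq_cre_general
    (μ : Measure ℝ) [IsProbabilityMeasure μ] (hnonneg : μ (Set.Iio 0) = 0)
    (m : ℝ)
    (hsym : ∀ x : ℝ, cdf μ (m + x) + cdf μ (m - x) = 1) :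
    (∀ n : ℕ, 1 ≤ n →
        (∫ x in Set.Ioi (0 : ℝ), (1 - (cdf μ x) ^ n)) - m
          = m - ∫ x in Set.Ioi (0 : ℝ), (1 - cdf μ x) ^ n)
      ∧ -∫ x in Set.Ioi (0 : ℝ), cdf μ x * Real.log (cdf μ x)
          = -∫ x in Set.Ioi (0 : ℝ), (1 - cdf μ x) * Real.log (1 - cdf μ x) := by
  have h0 : ∀ x < 0, cdf μ x = 0 := fun _ => cdf_eq_zero_of_measure_Iio_zero hnonneg
  refine ⟨fun n hn => ?_, ?_⟩
  · linarith [(cdf μ).integral_one_sub_pow_add_integral_one_sub_pow h0 hsym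
      (Nat.one_le_iff_ne_zero.1 hn)]
  · rw [(cdf μ).integral_mul_log_eq_integral_one_sub_mul_log h0 hsym]

/-- Let `X` be a nonnegative random variable with continuous cdf `F = cdf μ`
and finite mean `m = ∫₀^∞ (1 - F x) dx`, symmetric about its mean:
`F (m + x) + F (m - x) = 1` for all real `x`.  Then for every `n ≥ 1` the means of the extreme
order statistics, `μ_{n:n} = ∫₀^∞ (1 - (F x)^n) dx` and `μ_{1:n} = ∫₀^∞ (1 - F x)^n dx`,
satisfy `μ_{n:n} - m = m - μ_{1:n}`, and the cumulative entropy equals the cumulative residual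
entropy: `𝓒𝓔(X) = 𝓔(X)`. -/
theorem symm_order_stats_and_ce_eq_cre
    (μ : Measure ℝ) [IsProbabilityMeasure μ] (hnonneg : μ (Set.Iio 0) = 0)
    (hcont : Continuous (cdf μ))
    (hmean : IntegrableOn (fun x => 1 - cdf μ x) (Set.Ioi 0) volume)
    (m : ℝ) (hm : m = ∫ x in Set.Ioi (0 : ℝ), (1 - cdf μ x))
    (hsym : ∀ x : ℝ, cdf μ (m + x) + cdf μ (m - x) = 1) :
    (∀ n : ℕ, 1 ≤ n →
        (∫ x in Set.Ioi (0 : ℝ), (1 - (cdf μ x) ^ n)) - m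
          = m - ∫ x in Set.Ioi (0 : ℝ), (1 - cdf μ x) ^ n)
      ∧ -∫ x in Set.Ioi (0 : ℝ), cdf μ x * Real.log (cdf μ x)
          = -∫ x in Set.Ioi (0 : ℝ), (1 - cdf μ x) * Real.log (1 - cdf μ x) :=
  symm_order_stats_and_ce_eq_cre_general μ hnonneg m hsym
end
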